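/- arXiv:2003.07589 — 9 statements merged into one kernel-verified Lean document; each statement's English description precedes it below -/
import Mathlib

section
/- Let H be a finite simple graph, f a function from its vertices to the nonnegative integers, and F an edge set with deg_F(v) ≤ f(v) for every vertex v. Then for every vertex subset B and every edge subset I ⊆ δ(B), one has |F ∩ (γ(B) ∪ I)| ≤ ⌊(f(B) + |I|)/2⌋. -/
open Finset
open scoped Classical

/-!
Double counting: every edge counted on the left has both ends in `B`, or lies in `I` and has an
end in `B`, so it contributes at least `2` to `∑_{v ∈ B} deg_F(v) + |I| ≤ f(B) + |I|`.
-/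

theorem Sym2.two_le_card_filter_mem {α : Type*} [DecidableEq α] {z : Sym2 α} {B : Finset α}
    (hz : ¬ z.IsDiag) (hB : ∀ a ∈ z, a ∈ B) : 2 ≤ #{a ∈ B | a ∈ z} := by
  rw [← z.card_toFinset_of_not_isDiag hz]
  exact card_le_card fun a ha => mem_filter.2 ⟨hB a (mem_toFinset.1 ha), mem_toFinset.1 ha⟩

theorem two_mul_card_le_sum_card_filter_mem_add_card {α : Type*} [DecidableEq α]
    {F I : Finset (Sym2 α)} {B : Finset α} (hdiag : ∀ e ∈ F, ¬ e.IsDiag)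
    (hcover : ∀ e ∈ F, (∀ a ∈ e, a ∈ B) ∨ (e ∈ I ∧ ∃ a ∈ e, a ∈ B)) :
    2 * #F ≤ ∑ v ∈ B, #{e ∈ F | v ∈ e} + #I := by
  have hedge : ∀ e ∈ F, 2 ≤ #{v ∈ B | v ∈ e} + if e ∈ I then 1 else 0 := by
    intro e he
    rcases hcover e he with hall | ⟨heI, a, hae, haB⟩
    · have := Sym2.two_le_card_filter_mem (hdiag e he) hall
      omega
    · have : 0 < #{v ∈ B | v ∈ e} := card_pos.2 ⟨a, mem_filter.2 ⟨haB, hae⟩⟩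
      simp only [heI, if_true]
      omega
  calc 2 * #F = ∑ _e ∈ F, 2 := by rw [sum_const, smul_eq_mul, mul_comm]
    _ ≤ ∑ e ∈ F, (#{v ∈ B | v ∈ e} + if e ∈ I then 1 else 0) := sum_le_sum hedge
    _ = ∑ v ∈ B, #{e ∈ F | v ∈ e} + #{e ∈ F | e ∈ I} := by
      rw [sum_add_distrib, sum_boole, Nat.cast_id]
      congr 1
      exact sum_card_bipartiteAbove_eq_sum_card_bipartiteBelow (fun e v => v ∈ e)
    _ ≤ ∑ v ∈ B, #{e ∈ F | v ∈ e} + #I := by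
      gcongr
      exact fun e he => (mem_filter.1 he).2

/-- Let `H` be a finite simple graph, `f` a function from its
vertices to the nonnegative integers, and `F` an edge set of `H` with
`deg_F(v) ≤ f(v)` for every vertex `v`.  Then for every vertex subset `B` and
every edge subset `I ⊆ δ(B)`, one has
`|F ∩ (γ(B) ∪ I)| ≤ ⌊(f(B) + |I|) / 2⌋`. -/
theorem stmt_1 {V : Type*} [Fintype V] [DecidableEq V] (H : SimpleGraph V)
    (f : V → ℕ) (F : Finset (Sym2 V)) (hF : ∀ e ∈ F, e ∈ H.edgeSet)
    (hdeg : ∀ v : V, (F.filter (fun e => v ∈ e)).card ≤ f v)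
    (B : Finset V) (I : Finset (Sym2 V))
    (hI : ∀ e ∈ I, e ∈ H.edgeSet ∧ (∃ a ∈ e, a ∈ B) ∧ ∃ a ∈ e, a ∉ B) :
    (F.filter (fun e => (∀ a ∈ e, a ∈ B) ∨ e ∈ I)).card ≤ (∑ v ∈ B, f v + I.card) / 2 := by
  set F' := F.filter (fun e => (∀ a ∈ e, a ∈ B) ∨ e ∈ I)
  have hcount : 2 * #F' ≤ ∑ v ∈ B, #{e ∈ F' | v ∈ e} + #I :=
    two_mul_card_le_sum_card_filter_mem_add_card
      (fun e he => H.not_isDiag_of_mem_edgeSet (hF e (mem_filter.1 he).1))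
      (fun e he => (mem_filter.1 he).2.imp_right fun heI => ⟨heI, (hI e heI).2.1⟩)
  have hdegB : ∑ v ∈ B, #{e ∈ F' | v ∈ e} ≤ ∑ v ∈ B, f v :=
    sum_le_sum fun v _ => (card_le_card (filter_subset_filter _ (filter_subset _ _))).trans (hdeg v)
  rw [Nat.le_div_iff_mul_le two_pos]
  omega
end

section
/- Let F and F* be perfect f-factors of 𝒢, let y:𝒱→ℤ, let Ω be a finite family of pairs (B, I(B)) with B ⊆ 𝒱 and I(B) ⊆ δ(B), and let z:Ω→ℤ be nonnegative. Define yz(u,v) := y(u)+y(v)+Σ_{(B,I(B))∈Ω : (u,v)∈γ(B)∪I(B)} z(B). Assume approximate complementary slackness: (dominance) yz(e) ≥ μ(e)−2 for every e∈ℰ; (tightness) yz(e) ≤ μ(e) for every e∈F; (maturity) |F ∩ (γ(B)∪I(B))| = ⌊(f(B)+|I(B)|)/2⌋ for every (B,I(B))∈Ω. Then μ(F) ≥ μ(F*) − f(𝒱), where f(𝒱)=Σ_{v∈𝒱}f(v). -/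
/-!
Write `yz(e)` for the dual value of an edge. Summed over a perfect `f`-factor `G`, it equals
`∑ᵥ f(v) y(v) + ∑_{(B,I(B)) ∈ Ω} z(B) |G ∩ (γ(B) ∪ I(B))|`. Counting endpoints in `B` shows
`2 |G ∩ (γ(B) ∪ I(B))| ≤ f(B) + |I(B)|` for every perfect `f`-factor, and maturity says that `F`
attains this bound, so `z ≥ 0` gives `yz(F*) ≤ yz(F)`. Tightness gives `yz(F) ≤ μ(F)`, dominance
gives `μ(F*) ≤ yz(F*) + 2|F*|`, and `2|F*| = f(𝒱)`.
-/

open Finset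
open scoped Classical

/-- An edge `e` belongs to `γ(B) ∪ I(B)` for a blossom-pair `p = (B, I(B))`:
either both endpoints of `e` lie in `B`, or `e ∈ I(B)`. -/
def inGamI {V : Type*} (p : Finset V × Finset (Sym2 V)) (e : Sym2 V) : Prop :=
  (∀ a ∈ e, a ∈ p.1) ∨ e ∈ p.2

/-- `yz(u,v) = y(u) + y(v) + Σ_{(B,I(B)) ∈ Ω : (u,v) ∈ γ(B) ∪ I(B)} z(B)`. -/
noncomputable def yzP {V : Type*} (y : V → ℤ)
    (Ω : Finset (Finset V × Finset (Sym2 V)))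
    (z : Finset V × Finset (Sym2 V) → ℤ) (u v : V) : ℤ :=
  y u + y v + ∑ p ∈ Ω.filter (fun p => inGamI p s(u, v)), z p

theorem sum_sum_filter_eq_sum_card_filter_mul {α β R : Type*} [CommSemiring R]
    (s : Finset α) (t : Finset β) (r : β → α → Prop) [∀ b a, Decidable (r b a)] (g : β → R) :
    ∑ a ∈ s, ∑ b ∈ t with r b a, g b = ∑ b ∈ t, #{a ∈ s | r b a} * g b := by
  simp only [sum_filter]
  rw [sum_comm]
  refine sum_congr rfl fun b _ => ?_
  rw [← sum_filter, sum_const, nsmul_eq_mul]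

namespace Sym2

variable {V : Type*} [DecidableEq V]

theorem card_filter_mem_of_not_isDiag {e : Sym2 V} (he : ¬ e.IsDiag) {B : Finset V}
    (hB : ∀ a ∈ e, a ∈ B) : #{a ∈ B | a ∈ e} = 2 := by
  induction e using Sym2.ind with
  | _ u v =>
    have huv : u ≠ v := mt mk_isDiag_iff.mpr he
    have : {a ∈ B | a ∈ s(u, v)} = {u, v} := by
      ext a
      constructor
      · simp +contextual
      · intro ha
        exact mem_filter.mpr ⟨hB a (by simpa using ha), by simpa using ha⟩
    rw [this, card_pair huv]

end Sym2

section Degrees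

variable {V : Type*} [DecidableEq V]

theorem sum_card_filter_mem_eq_two_mul_card [Fintype V] {G : Finset (Sym2 V)}
    (hG : ∀ e ∈ G, ¬ e.IsDiag) :
    ∑ v, #{e ∈ G | v ∈ e} = 2 * #G := by
  calc ∑ v, #{e ∈ G | v ∈ e}
      = ∑ e ∈ G, #{v | v ∈ e} := sum_card_bipartiteAbove_eq_sum_card_bipartiteBelow _
    _ = ∑ e ∈ G, 2 := sum_congr rfl fun e he =>
        Sym2.card_filter_mem_of_not_isDiag (hG e he) fun a _ => mem_univ a
    _ = 2 * #G := by rw [sum_const, smul_eq_mul, mul_comm]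

/-- Each edge of `G` in `γ(B) ∪ I(B)` has two endpoints in `B`, or lies in `I(B)` and has one. -/
theorem two_mul_card_filter_inGamI_le {G : Finset (Sym2 V)} (hG : ∀ e ∈ G, ¬ e.IsDiag)
    {p : Finset V × Finset (Sym2 V)} (hp : ∀ e ∈ p.2, ∃ a ∈ e, a ∈ p.1) :
    2 * #{e ∈ G | inGamI p e} ≤ ∑ v ∈ p.1, #{e ∈ G | v ∈ e} + #p.2 := by
  have hedge : ∀ e ∈ G, inGamI p e → 2 ≤ #{a ∈ p.1 | a ∈ e} + if e ∈ p.2 then 1 else 0 := by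
    rintro e he (hB | hI)
    · rw [Sym2.card_filter_mem_of_not_isDiag (hG e he) hB]
      omega
    · obtain ⟨a, hae, haB⟩ := hp e hI
      have : 0 < #{a ∈ p.1 | a ∈ e} := card_pos.mpr ⟨a, mem_filter.mpr ⟨haB, hae⟩⟩
      rw [if_pos hI]
      omega
  calc 2 * #{e ∈ G | inGamI p e}
      = ∑ e ∈ G with inGamI p e, 2 := by rw [sum_const, smul_eq_mul, mul_comm]
    _ ≤ ∑ e ∈ G with inGamI p e, (#{a ∈ p.1 | a ∈ e} + if e ∈ p.2 then 1 else 0) :=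
        sum_le_sum fun e he => hedge e (mem_filter.mp he).1 (mem_filter.mp he).2
    _ = ∑ e ∈ G with inGamI p e, #{a ∈ p.1 | a ∈ e} + #{e ∈ G | inGamI p e ∧ e ∈ p.2} := by
        rw [sum_add_distrib, sum_boole, filter_filter, Nat.cast_id]
    _ ≤ ∑ e ∈ G, #{a ∈ p.1 | a ∈ e} + #p.2 := by
        gcongr
        · exact filter_subset _ _
        · exact fun e he => (mem_filter.mp he).2.2
    _ = ∑ v ∈ p.1, #{e ∈ G | v ∈ e} + #p.2 := by
        congr 1
        exact (sum_card_bipartiteAbove_eq_sum_card_bipartiteBelow _).symm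

end Degrees

section DualValue

variable {V : Type*} [Fintype V] [DecidableEq V] (y : V → ℤ)
  (Ω : Finset (Finset V × Finset (Sym2 V))) (z : Finset V × Finset (Sym2 V) → ℤ)

/-- `yzP` as a function on `Sym2 V`; the two agree on non-loops (`yzEdge_mk`). -/
noncomputable def yzEdge (e : Sym2 V) : ℤ :=
  ∑ a with a ∈ e, y a + ∑ p ∈ Ω with inGamI p e, z p

theorem yzEdge_mk {u v : V} (huv : u ≠ v) : yzEdge y Ω z s(u, v) = yzP y Ω z u v := by
  have : ({a | a ∈ s(u, v)} : Finset V) = {u, v} := by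
    ext a
    simp
  rw [yzEdge, yzP, this, sum_pair huv]

theorem forall_yzEdge_of_forall_yzP {G : Finset (Sym2 V)} (hG : ∀ e ∈ G, ¬ e.IsDiag)
    {P : Sym2 V → ℤ → Prop} (h : ∀ u v, s(u, v) ∈ G → P s(u, v) (yzP y Ω z u v)) :
    ∀ e ∈ G, P e (yzEdge y Ω z e) := by
  intro e he
  induction e using Sym2.ind with
  | _ u v => rw [yzEdge_mk _ _ _ (mt Sym2.mk_isDiag_iff.mpr (hG _ he))]; exact h u v he

theorem sum_yzEdge (G : Finset (Sym2 V)) :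
    ∑ e ∈ G, yzEdge y Ω z e
      = ∑ v, #{e ∈ G | v ∈ e} * y v + ∑ p ∈ Ω, #{e ∈ G | inGamI p e} * z p := by
  simp only [yzEdge, sum_add_distrib, sum_sum_filter_eq_sum_card_filter_mul]

end DualValue

theorem stmt_2_general {V : Type*} [Fintype V] [DecidableEq V]
    (ℰ : Finset (Sym2 V)) (hE : ∀ e ∈ ℰ, ¬ e.IsDiag)
    (μ : Sym2 V → ℤ) (f : V → ℕ)
    (F Fstar : Finset (Sym2 V)) (hFE : F ⊆ ℰ) (hFsE : Fstar ⊆ ℰ)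
    (hFdeg : ∀ v : V, (F.filter (fun e => v ∈ e)).card = f v)
    (hFsdeg : ∀ v : V, (Fstar.filter (fun e => v ∈ e)).card = f v)
    (y : V → ℤ) (Ω : Finset (Finset V × Finset (Sym2 V)))
    (hΩ : ∀ p ∈ Ω, ∀ e ∈ p.2, e ∈ ℰ ∧ (∃ a ∈ e, a ∈ p.1) ∧ ∃ a ∈ e, a ∉ p.1)
    (z : Finset V × Finset (Sym2 V) → ℤ) (hz : ∀ p ∈ Ω, 0 ≤ z p)
    (dominance : ∀ u v : V, s(u, v) ∈ ℰ → yzP y Ω z u v ≥ μ s(u, v) - 2)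
    (tightness : ∀ u v : V, s(u, v) ∈ F → yzP y Ω z u v ≤ μ s(u, v))
    (maturity : ∀ p ∈ Ω,
      (F.filter (fun e => inGamI p e)).card = (∑ v ∈ p.1, f v + p.2.card) / 2) :
    ∑ e ∈ F, μ e ≥ ∑ e ∈ Fstar, μ e - (∑ v : V, f v : ℤ) := by
  have hFloop : ∀ e ∈ F, ¬ e.IsDiag := fun e he => hE e (hFE he)
  have hFsloop : ∀ e ∈ Fstar, ¬ e.IsDiag := fun e he => hE e (hFsE he)
  have hT : ∀ e ∈ F, yzEdge y Ω z e ≤ μ e :=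
    forall_yzEdge_of_forall_yzP y Ω z hFloop (P := fun e t => t ≤ μ e) tightness
  have hD : ∀ e ∈ Fstar, μ e ≤ yzEdge y Ω z e + 2 :=
    forall_yzEdge_of_forall_yzP y Ω z hFsloop (P := fun e t => μ e ≤ t + 2) fun u v he => by
      linarith [dominance u v (hFsE he)]
  have hmature : ∀ p ∈ Ω, #{e ∈ Fstar | inGamI p e} ≤ #{e ∈ F | inGamI p e} := by
    intro p hp
    rw [maturity p hp, Nat.le_div_iff_mul_le two_pos, mul_comm]
    simp only [← hFsdeg]
    exact two_mul_card_filter_inGamI_le hFsloop fun e he => (hΩ p hp e he).2.1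
  have hfV : (∑ v, f v : ℤ) = 2 * #Fstar := by
    simp only [← hFsdeg]
    exact_mod_cast sum_card_filter_mem_eq_two_mul_card hFsloop
  calc ∑ e ∈ Fstar, μ e - (∑ v, f v : ℤ)
      ≤ ∑ e ∈ Fstar, yzEdge y Ω z e := by
        have := sum_le_sum hD
        rw [sum_add_distrib, sum_const, nsmul_eq_mul] at this
        linarith
    _ ≤ ∑ e ∈ F, yzEdge y Ω z e := by
        simp only [sum_yzEdge, hFdeg, hFsdeg]
        gcongr _ + ∑ p ∈ Ω, ?_ * _ with p hp
        · exact hz p hp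
        · exact_mod_cast hmature p hp
    _ ≤ ∑ e ∈ F, μ e := sum_le_sum hT

/-- If a perfect `f`-factor `F`, duals `y, z ≥ 0` and a family
`Ω` of pairs `(B, I(B))` with `I(B) ⊆ δ(B)` satisfy approximate complementary
slackness (dominance `yz(e) ≥ μ(e) − 2` on all edges, tightness `yz(e) ≤ μ(e)`
on `F`, and maturity `|F ∩ (γ(B) ∪ I(B))| = ⌊(f(B)+|I(B)|)/2⌋`), then for any
perfect `f`-factor `F*` one has `μ(F) ≥ μ(F*) − f(𝒱)`. -/
theorem stmt_2 {V : Type*} [Fintype V] [DecidableEq V]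
    (ℰ : Finset (Sym2 V)) (hE : ∀ e ∈ ℰ, ¬ e.IsDiag)
    (μ : Sym2 V → ℤ) (f : V → ℕ) (hf : ∀ v, 0 < f v)
    (F Fstar : Finset (Sym2 V)) (hFE : F ⊆ ℰ) (hFsE : Fstar ⊆ ℰ)
    (hFdeg : ∀ v : V, (F.filter (fun e => v ∈ e)).card = f v)
    (hFsdeg : ∀ v : V, (Fstar.filter (fun e => v ∈ e)).card = f v)
    (y : V → ℤ) (Ω : Finset (Finset V × Finset (Sym2 V)))
    (hΩ : ∀ p ∈ Ω, ∀ e ∈ p.2, e ∈ ℰ ∧ (∃ a ∈ e, a ∈ p.1) ∧ ∃ a ∈ e, a ∉ p.1)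
    (z : Finset V × Finset (Sym2 V) → ℤ) (hz : ∀ p ∈ Ω, 0 ≤ z p)
    (dominance : ∀ u v : V, s(u, v) ∈ ℰ → yzP y Ω z u v ≥ μ s(u, v) - 2)
    (tightness : ∀ u v : V, s(u, v) ∈ F → yzP y Ω z u v ≤ μ s(u, v))
    (maturity : ∀ p ∈ Ω,
      (F.filter (fun e => inGamI p e)).card = (∑ v ∈ p.1, f v + p.2.card) / 2) :
    ∑ e ∈ F, μ e ≥ ∑ e ∈ Fstar, μ e - (∑ v : V, f v : ℤ) :=
  stmt_2_general ℰ hE μ f F Fstar hFE hFsE hFdeg hFsdeg y Ω hΩ z hz dominance tightness maturity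
end

section
/- Suppose the edge weights μ̄₀, the edge set F₀, the duals y₀:𝒱→ℤ, z₀:Ω→ℤ (z₀ ≥ 0) satisfy: yz₀(e) ≥ μ̄₀(e)−2 for every e∈ℰ and yz₀(e) ≤ μ̄₀(e) for every e∈F₀. After the scaling step set y(u) := 2y₀(u)+3 for every vertex u, z(B) := 2z₀(B) for every B∈Ω, and let μ̄:ℰ→ℤ be any weight function with 2μ̄₀(e) ≤ μ̄(e) ≤ 2μ̄₀(e)+2 for every e∈ℰ. Then: (1) μ̄(e) ≤ yz(e) for every e∈ℰ; (2) μ̄(e) ≥ yz(e)−6 for every e∈F₀. -/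
open Finset
open scoped Classical

theorem yzP_mul_add {V : Type*} (a b : ℤ) (y : V → ℤ)
    (Ω : Finset (Finset V × Finset (Sym2 V)))
    (z : Finset V × Finset (Sym2 V) → ℤ) (u v : V) :
    yzP (fun x => a * y x + b) Ω (fun p => a * z p) u v = a * yzP y Ω z u v + 2 * b := by
  simp only [yzP, ← Finset.mul_sum]
  ring

theorem stmt_3_general {V : Type*}
    (ℰ F₀ : Finset (Sym2 V)) (hF₀E : F₀ ⊆ ℰ)
    (μ₀ μ : Sym2 V → ℤ) (y₀ : V → ℤ)
    (Ω : Finset (Finset V × Finset (Sym2 V)))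
    (z₀ : Finset V × Finset (Sym2 V) → ℤ)
    (dominance : ∀ u v : V, s(u, v) ∈ ℰ → yzP y₀ Ω z₀ u v ≥ μ₀ s(u, v) - 2)
    (tightness : ∀ u v : V, s(u, v) ∈ F₀ → yzP y₀ Ω z₀ u v ≤ μ₀ s(u, v))
    (hμ : ∀ e ∈ ℰ, 2 * μ₀ e ≤ μ e ∧ μ e ≤ 2 * μ₀ e + 2) :
    (∀ u v : V, s(u, v) ∈ ℰ →
      μ s(u, v) ≤ yzP (fun x => 2 * y₀ x + 3) Ω (fun p => 2 * z₀ p) u v) ∧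
    (∀ u v : V, s(u, v) ∈ F₀ →
      μ s(u, v) ≥ yzP (fun x => 2 * y₀ x + 3) Ω (fun p => 2 * z₀ p) u v - 6) := by
  refine ⟨fun u v he => ?_, fun u v he => ?_⟩
  · rw [yzP_mul_add]
    linarith [dominance u v he, (hμ _ he).2]
  · rw [yzP_mul_add]
    linarith [tightness u v he, (hμ _ (hF₀E he)).1]

/-- Suppose `μ̄₀, F₀, y₀, z₀ ≥ 0` satisfy `yz₀(e) ≥ μ̄₀(e) − 2`
on all edges and `yz₀(e) ≤ μ̄₀(e)` on `F₀`.  After the scaling step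
`y = 2y₀ + 3`, `z = 2z₀`, and for any `μ̄` with `2μ̄₀(e) ≤ μ̄(e) ≤ 2μ̄₀(e) + 2`:
(1) `μ̄(e) ≤ yz(e)` for every edge `e`; (2) `μ̄(e) ≥ yz(e) − 6` for `e ∈ F₀`. -/
theorem stmt_3 {V : Type*} [Fintype V] [DecidableEq V]
    (ℰ F₀ : Finset (Sym2 V)) (hF₀E : F₀ ⊆ ℰ)
    (μ₀ μ : Sym2 V → ℤ) (y₀ : V → ℤ)
    (Ω : Finset (Finset V × Finset (Sym2 V)))
    (hΩ : ∀ p ∈ Ω, ∀ e ∈ p.2, e ∈ ℰ ∧ (∃ a ∈ e, a ∈ p.1) ∧ ∃ a ∈ e, a ∉ p.1)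
    (z₀ : Finset V × Finset (Sym2 V) → ℤ) (hz₀ : ∀ p ∈ Ω, 0 ≤ z₀ p)
    (dominance : ∀ u v : V, s(u, v) ∈ ℰ → yzP y₀ Ω z₀ u v ≥ μ₀ s(u, v) - 2)
    (tightness : ∀ u v : V, s(u, v) ∈ F₀ → yzP y₀ Ω z₀ u v ≤ μ₀ s(u, v))
    (hμ : ∀ e ∈ ℰ, 2 * μ₀ e ≤ μ e ∧ μ e ≤ 2 * μ₀ e + 2) :
    (∀ u v : V, s(u, v) ∈ ℰ →
      μ s(u, v) ≤ yzP (fun x => 2 * y₀ x + 3) Ω (fun p => 2 * z₀ p) u v) ∧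
    (∀ u v : V, s(u, v) ∈ F₀ →
      μ s(u, v) ≥ yzP (fun x => 2 * y₀ x + 3) Ω (fun p => 2 * z₀ p) u v - 6) :=
  stmt_3_general ℰ F₀ hF₀E μ₀ μ y₀ Ω z₀ dominance tightness hμ
end

section
/- Let B ⊆ 𝒱 be such that every edge of δ(B) joins an original vertex in B to an auxiliary vertex outside B. Let η(B) be either null or an edge of δ(B); if η(B)=(u,e_u) with e_u auxiliary, let ζ(B)=(e_u,e_v) be the other edge incident to e_u. Set I(B) := δ_{F₀}(B) △ {η(B)}. Let y₀:𝒱→ℤ and let z₀(B) be an even nonnegative integer, and define y(w) := y₀(w) + z₀(B)/2 if w∈B or w is an endpoint of some edge of I(B), and y(w) := y₀(w) otherwise. Then: (1) for every edge (u,v)∈ℰ, y(u)+y(v) ≥ y₀(u)+y₀(v) + z₀(B)·[(u,v)∈γ(B)∪I(B)]; (2) for every edge (u,v)∈F₀, y(u)+y(v) = y₀(u)+y₀(v) + z₀(B)·[(u,v)∈γ(B)∪I(B)] + (z₀(B)/2)·[(u,v)∈{ζ(B),η(B)}]. -/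
open Finset
open scoped Classical symmDiff

/-!
Call a vertex *raised* if it lies in `B` or on an edge of `I(B)`; then `y(u) + y(v)` exceeds
`y₀(u) + y₀(v)` by `z₀(B)/2` times the number of raised endpoints of `(u, v)`. Both endpoints of
an edge of `γ(B) ∪ I(B)` are raised, which gives (1). For (2), a vertex `w ∉ B` on an `F₀`-edge `e`
is raised only through an auxiliary endpoint of an `I(B)`-edge; since `f = 1` there, that edge is
`e` itself unless it is `η`, whose auxiliary endpoint is shared only with `ζ`. So `w` is raised
iff `e ∈ I(B)`, or `e = ζ` and `w` is the common endpoint of `η` and `ζ` (then `η ∉ F₀`, hence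
`η ∈ I(B)`). Counting, `F₀`-edges of `γ(B) ∪ I(B)` have two raised endpoints, `ζ` and `η` one.
-/

section BlowupGraph

variable {V : Type*}

def Crosses (B : Finset V) (e : Sym2 V) : Prop := (∃ a ∈ e, a ∈ B) ∧ ∃ a ∈ e, a ∉ B

lemma crosses_mk {B : Finset V} {u v : V} : Crosses B s(u, v) ↔ ¬(u ∈ B ↔ v ∈ B) := by
  simp only [Crosses, Sym2.mem_iff, exists_eq_or_imp, exists_eq_left]
  tauto

def Raised (B : Finset V) (I : Finset (Sym2 V)) (w : V) : Prop := w ∈ B ∨ ∃ e ∈ I, w ∈ e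

lemma raised_of_mem {B : Finset V} {I : Finset (Sym2 V)} {e : Sym2 V} {w : V} (hw : w ∈ e)
    (h : (∀ a ∈ e, a ∈ B) ∨ e ∈ I) : Raised B I w :=
  h.imp (· w hw) (⟨e, ·, hw⟩)

def CutEdgesOrigToAux (ℰ : Finset (Sym2 V)) (orig : Set V) (B : Finset V) : Prop :=
  ∀ e ∈ ℰ, Crosses B e → ∃ a x, a ∈ B ∧ a ∈ orig ∧ x ∉ B ∧ x ∉ orig ∧ e = s(a, x)

def IsOtherEdgeAtAux (ℰ : Finset (Sym2 V)) (orig : Set V) (B : Finset V)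
    (η ζ : Option (Sym2 V)) : Prop :=
  ∀ e ∈ η, ∃ a x, e = s(a, x) ∧ a ∈ B ∧ x ∉ orig ∧
    ∃ e' ∈ ζ, e' ∈ ℰ ∧ x ∈ e' ∧ e' ≠ e ∧
      (∃ x', e' = s(x, x') ∧ x' ∉ orig) ∧
      ∀ e'' ∈ ℰ, x ∈ e'' → e'' = e ∨ e'' = e'

lemma Finset.eq_of_card_filter_le_one {α : Type*} {s : Finset α} {p : α → Prop} [DecidablePred p]
    (h : (s.filter p).card ≤ 1) {a b : α} (ha : a ∈ s) (hb : b ∈ s) (hpa : p a) (hpb : p b) :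
    a = b :=
  card_le_one.1 h _ (mem_filter.2 ⟨ha, hpa⟩) _ (mem_filter.2 ⟨hb, hpb⟩)

section Potential

variable {y y₀ : V → ℤ} {R : V → Prop} [DecidablePred R] {c d : ℤ} {u v : V}

lemma add_ge_of_raised (hy : ∀ w, y w = if R w then y₀ w + c else y₀ w) (hc : 0 ≤ c)
    (hd : d = 2 * c) {p : Prop} [Decidable p] (hp : p → R u ∧ R v) :
    y u + y v ≥ y₀ u + y₀ v + if p then d else 0 := by
  rw [hy u, hy v]
  split_ifs <;> first | omega | (exfalso; tauto)

lemma add_eq_of_raised (hy : ∀ w, y w = if R w then y₀ w + c else y₀ w)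
    (hd : d = 2 * c) {p q : Prop} [Decidable p] [Decidable q]
    (hp : p ↔ R u ∧ R v) (hq : q ↔ ¬(R u ↔ R v)) :
    y u + y v = y₀ u + y₀ v + (if p then d else 0) + (if q then c else 0) := by
  rw [hy u, hy v]
  split_ifs <;> simp_all <;> omega

end Potential

variable {ℰ F₀ : Finset (Sym2 V)} {orig : Set V} {B : Finset V} {η ζ : Option (Sym2 V)}

lemma CutEdgesOrigToAux.notMem_orig (hδ : CutEdgesOrigToAux ℰ orig B)
    {e : Sym2 V} (he : e ∈ ℰ) (hc : Crosses B e) {w : V} (hw : w ∈ e) (hwB : w ∉ B) :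
    w ∉ orig := by
  obtain ⟨a, x, haB, -, -, hx, rfl⟩ := hδ e he hc
  rcases Sym2.mem_iff.1 hw with rfl | rfl
  exacts [absurd haB hwB, hx]

lemma mem_filter_crosses_symmDiff_iff [DecidableEq V] (hη : ∀ e ∈ η, Crosses B e)
    {e : Sym2 V} :
    e ∈ F₀.filter (Crosses B) ∆ η.toFinset ↔
      (e ∈ F₀ ∧ Crosses B e ∧ η ≠ some e) ∨ (η = some e ∧ e ∉ F₀) := by
  have := hη e
  simp only [mem_symmDiff, mem_filter, Option.mem_toFinset, Option.mem_def] at this ⊢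
  grind

lemma IsOtherEdgeAtAux.endpoints_of_eq_some (hE : ∀ e ∈ ℰ, ¬ e.IsDiag)
    (hδ : CutEdgesOrigToAux ℰ orig B) (hη : ∀ e ∈ η, Crosses B e) (hζnull : η = none → ζ = none)
    (hζ : IsOtherEdgeAtAux ℰ orig B η ζ) {u v : V} (huv : ζ = some s(u, v)) :
    u ∉ B ∧ v ∉ B ∧ ¬((∃ e₀ ∈ η, u ∈ e₀) ↔ ∃ e₀ ∈ η, v ∈ e₀) := by
  obtain ⟨e₀, rfl⟩ : ∃ e₀, η = some e₀ := by
    cases η with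
    | none => simp [hζnull rfl] at huv
    | some e₀ => exact ⟨e₀, rfl⟩
  obtain ⟨a, x, rfl, haB, hx, e₁, he₁, he₁ℰ, -, -, ⟨x', rfl, hx'⟩, -⟩ := hζ _ rfl
  have hxB : x ∉ B := by have := crosses_mk.1 (hη _ rfl); tauto
  have hx'B : x' ∉ B := by
    intro hx'B
    obtain ⟨b, _, -, hb, -, -, hbe⟩ := hδ _ he₁ℰ (crosses_mk.2 (by tauto))
    have : b ∈ s(x, x') := hbe ▸ Sym2.mem_mk_left _ _
    rcases Sym2.mem_iff.1 this with rfl | rfl <;> contradiction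
  have hxx' : x ≠ x' := fun h => hE _ he₁ℰ (by simp [h])
  have hax : ∀ w ∉ B, w ∈ s(a, x) ↔ w = x := fun w hw => by
    simp only [Sym2.mem_iff]; grind
  rcases Sym2.eq_iff.1 (Option.some.inj (he₁.symm.trans huv)) with ⟨rfl, rfl⟩ | ⟨rfl, rfl⟩ <;>
    simp [hax _ hxB, hax _ hx'B, hxB, hx'B, hxx'.symm]

lemma raised_iff [DecidableEq V] (hF₀E : F₀ ⊆ ℰ)
    (hdeg : ∀ w ∉ orig, ∀ e₁ ∈ F₀, ∀ e₂ ∈ F₀, w ∈ e₁ → w ∈ e₂ → e₁ = e₂)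
    (hδ : CutEdgesOrigToAux ℰ orig B) (hη : ∀ e ∈ η, Crosses B e)
    (hζ : IsOtherEdgeAtAux ℰ orig B η ζ) {e : Sym2 V} (he : e ∈ F₀) {w : V} (hw : w ∈ e) :
    Raised B (F₀.filter (Crosses B) ∆ η.toFinset) w ↔
      w ∈ B ∨ (Crosses B e ∧ η ≠ some e) ∨ (ζ = some e ∧ ∃ e₀ ∈ η, w ∈ e₀) := by
  by_cases hwB : w ∈ B
  · simp [Raised, hwB]
  have eq_of_mem : ∀ a x, a ∈ B → w ∈ s(a, x) → w = x := fun a x haB hwx => by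
    rcases Sym2.mem_iff.1 hwx with rfl | rfl
    exacts [absurd haB hwB, rfl]
  simp only [Raised, hwB, false_or, mem_filter_crosses_symmDiff_iff hη]
  constructor
  · rintro ⟨e', (⟨he'F, hc, hne⟩ | ⟨hηe', he'F⟩), hwe'⟩
    · obtain rfl := hdeg w (hδ.notMem_orig (hF₀E he'F) hc hwe' hwB) _ he'F _ he hwe' hw
      exact Or.inl ⟨hc, hne⟩
    · obtain ⟨a, x, rfl, haB, -, e₁, he₁, -, -, -, -, huniq⟩ := hζ _ hηe'
      obtain rfl := eq_of_mem a x haB hwe'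
      rcases huniq e (hF₀E he) hw with rfl | rfl
      exacts [absurd he he'F, Or.inr ⟨he₁, _, hηe', hwe'⟩]
  · rintro (⟨hc, hne⟩ | ⟨hζe, e₀, he₀, hwe₀⟩)
    · exact ⟨e, Or.inl ⟨he, hc, hne⟩, hw⟩
    refine ⟨e₀, Or.inr ⟨he₀, fun he₀F => ?_⟩, hwe₀⟩
    obtain ⟨a, x, rfl, haB, hx, e₁, he₁, -, hxe₁, hne, -⟩ := hζ _ he₀
    obtain rfl : e₁ = e := Option.some.inj (he₁.symm.trans hζe)
    obtain rfl := eq_of_mem a x haB hwe₀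
    exact hne (hdeg w hx _ he _ he₀F hxe₁ hwe₀)

lemma raised_endpoints_iff [DecidableEq V] (hE : ∀ e ∈ ℰ, ¬ e.IsDiag) (hF₀E : F₀ ⊆ ℰ)
    (hdeg : ∀ w ∉ orig, ∀ e₁ ∈ F₀, ∀ e₂ ∈ F₀, w ∈ e₁ → w ∈ e₂ → e₁ = e₂)
    (hδ : CutEdgesOrigToAux ℰ orig B) (hη : ∀ e ∈ η, Crosses B e)
    (hζnull : η = none → ζ = none) (hζ : IsOtherEdgeAtAux ℰ orig B η ζ)
    {I : Finset (Sym2 V)} (hI : I = F₀.filter (Crosses B) ∆ η.toFinset)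
    {u v : V} (he : s(u, v) ∈ F₀) :
    (((∀ a ∈ s(u, v), a ∈ B) ∨ s(u, v) ∈ I) ↔ Raised B I u ∧ Raised B I v) ∧
      ((some s(u, v) = ζ ∨ some s(u, v) = η) ↔ ¬(Raised B I u ↔ Raised B I v)) := by
  subst hI
  rw [raised_iff hF₀E hdeg hδ hη hζ he (Sym2.mem_mk_left u v),
    raised_iff hF₀E hdeg hδ hη hζ he (Sym2.mem_mk_right u v), mem_filter_crosses_symmDiff_iff hη]
  have hcross : Crosses B s(u, v) ↔ ¬(u ∈ B ↔ v ∈ B) := crosses_mk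
  have hηe : η = some s(u, v) → Crosses B s(u, v) := hη _
  have hζe := hζ.endpoints_of_eq_some hE hδ hη hζnull (u := u) (v := v)
  grind

end BlowupGraph

theorem stmt_4_general {V : Type*} [Fintype V] [DecidableEq V]
    (ℰ : Finset (Sym2 V)) (hE : ∀ e ∈ ℰ, ¬ e.IsDiag)
    (orig : Set V) (f : V → ℕ)
    (haux1 : ∀ v, v ∉ orig → f v = 1)
    (F₀ : Finset (Sym2 V)) (hF₀E : F₀ ⊆ ℰ)
    (hfac : ∀ v : V, (F₀.filter (fun e => v ∈ e)).card ≤ f v)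
    (B : Finset V)
    (hδ : ∀ e ∈ ℰ, ((∃ a ∈ e, a ∈ B) ∧ ∃ a ∈ e, a ∉ B) →
      ∃ a x, a ∈ B ∧ a ∈ orig ∧ x ∉ B ∧ x ∉ orig ∧ e = s(a, x))
    (η ζ : Option (Sym2 V))
    (hη : ∀ e ∈ η, e ∈ ℰ ∧ (∃ a ∈ e, a ∈ B) ∧ ∃ a ∈ e, a ∉ B)
    (hζnull : η = none → ζ = none)
    (hζ : ∀ e ∈ η, ∃ a x, e = s(a, x) ∧ a ∈ B ∧ x ∉ orig ∧
      ∃ e' ∈ ζ, e' ∈ ℰ ∧ x ∈ e' ∧ e' ≠ e ∧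
        (∃ x', e' = s(x, x') ∧ x' ∉ orig) ∧
        ∀ e'' ∈ ℰ, x ∈ e'' → e'' = e ∨ e'' = e')
    (y₀ : V → ℤ) (zB : ℤ) (hzB : 0 ≤ zB) (hzBeven : Even zB) :
    ∀ IB : Finset (Sym2 V),
      IB = ((F₀.filter (fun e => (∃ a ∈ e, a ∈ B) ∧ ∃ a ∈ e, a ∉ B)) \ η.toFinset) ∪
           (η.toFinset \ (F₀.filter (fun e => (∃ a ∈ e, a ∈ B) ∧ ∃ a ∈ e, a ∉ B))) →
    ∀ y : V → ℤ,
      (∀ u : V, y u = if u ∈ B ∨ ∃ e ∈ IB, u ∈ e then y₀ u + zB / 2 else y₀ u) →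
    (∀ u v : V, s(u, v) ∈ ℰ →
      y u + y v ≥ y₀ u + y₀ v +
        (if (∀ a ∈ s(u, v), a ∈ B) ∨ s(u, v) ∈ IB then zB else 0)) ∧
    (∀ u v : V, s(u, v) ∈ F₀ →
      y u + y v = y₀ u + y₀ v +
        (if (∀ a ∈ s(u, v), a ∈ B) ∨ s(u, v) ∈ IB then zB else 0) +
        (if some s(u, v) = ζ ∨ some s(u, v) = η then zB / 2 else 0)) := by
  intro IB hIB y hy
  have hI : IB = F₀.filter (Crosses B) ∆ η.toFinset := by
    rw [hIB, symmDiff_def, sup_eq_union]; congr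
  have hdeg : ∀ w ∉ orig, ∀ e₁ ∈ F₀, ∀ e₂ ∈ F₀, w ∈ e₁ → w ∈ e₂ → e₁ = e₂ :=
    fun w hw _ h₁ _ h₂ => eq_of_card_filter_le_one ((hfac w).trans (haux1 w hw).le) h₁ h₂
  have hzB_half : zB = 2 * (zB / 2) := (Int.two_mul_ediv_two_of_even hzBeven).symm
  refine ⟨fun u v _ => add_ge_of_raised hy (by omega) hzB_half fun h =>
    ⟨raised_of_mem (Sym2.mem_mk_left u v) h, raised_of_mem (Sym2.mem_mk_right u v) h⟩,
    fun u v he => ?_⟩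
  obtain ⟨hboth, hone⟩ :=
    raised_endpoints_iff hE hF₀E hdeg hδ (fun e h => (hη e h).2) hζnull hζ hI he
  exact add_eq_of_raised hy hzB_half hboth hone

/-- the dissolve step.  In the blowup graph (original
vertices `orig`, auxiliary vertices outside `orig` with `f = 1` and exactly
two incident edges), let `B` be such that every edge of `δ(B)` joins an
original vertex in `B` to an auxiliary vertex outside `B`, let `η` be null or
an edge of `δ(B)`, let `ζ` be the other edge incident to the auxiliary
endpoint of `η`, and let `I(B) = δ_{F₀}(B) △ {η}`.  If `y` raises `y₀` by
`z₀(B)/2` exactly on `B` and the endpoints of `I(B)`-edges, then: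
(1) `y(u)+y(v) ≥ y₀(u)+y₀(v) + z₀(B)·[(u,v) ∈ γ(B)∪I(B)]` for every edge;
(2) `y(u)+y(v) = y₀(u)+y₀(v) + z₀(B)·[(u,v) ∈ γ(B)∪I(B)]
      + (z₀(B)/2)·[(u,v) ∈ {ζ(B),η(B)}]` for every edge of `F₀`. -/
theorem stmt_4 {V : Type*} [Fintype V] [DecidableEq V]
    (ℰ : Finset (Sym2 V)) (hE : ∀ e ∈ ℰ, ¬ e.IsDiag)
    (orig : Set V) (f : V → ℕ)
    (haux1 : ∀ v, v ∉ orig → f v = 1)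
    (hauxdeg : ∀ v, v ∉ orig → (ℰ.filter (fun e => v ∈ e)).card = 2)
    (F₀ : Finset (Sym2 V)) (hF₀E : F₀ ⊆ ℰ)
    (hfac : ∀ v : V, (F₀.filter (fun e => v ∈ e)).card ≤ f v)
    (B : Finset V)
    (hδ : ∀ e ∈ ℰ, ((∃ a ∈ e, a ∈ B) ∧ ∃ a ∈ e, a ∉ B) →
      ∃ a x, a ∈ B ∧ a ∈ orig ∧ x ∉ B ∧ x ∉ orig ∧ e = s(a, x))
    (η ζ : Option (Sym2 V))
    (hη : ∀ e ∈ η, e ∈ ℰ ∧ (∃ a ∈ e, a ∈ B) ∧ ∃ a ∈ e, a ∉ B)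
    (hζnull : η = none → ζ = none)
    (hζ : ∀ e ∈ η, ∃ a x, e = s(a, x) ∧ a ∈ B ∧ x ∉ orig ∧
      ∃ e' ∈ ζ, e' ∈ ℰ ∧ x ∈ e' ∧ e' ≠ e ∧
        (∃ x', e' = s(x, x') ∧ x' ∉ orig) ∧
        ∀ e'' ∈ ℰ, x ∈ e'' → e'' = e ∨ e'' = e')
    (y₀ : V → ℤ) (zB : ℤ) (hzB : 0 ≤ zB) (hzBeven : Even zB) :
    ∀ IB : Finset (Sym2 V),
      IB = ((F₀.filter (fun e => (∃ a ∈ e, a ∈ B) ∧ ∃ a ∈ e, a ∉ B)) \ η.toFinset) ∪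
           (η.toFinset \ (F₀.filter (fun e => (∃ a ∈ e, a ∈ B) ∧ ∃ a ∈ e, a ∉ B))) →
    ∀ y : V → ℤ,
      (∀ u : V, y u = if u ∈ B ∨ ∃ e ∈ IB, u ∈ e then y₀ u + zB / 2 else y₀ u) →
    (∀ u v : V, s(u, v) ∈ ℰ →
      y u + y v ≥ y₀ u + y₀ v +
        (if (∀ a ∈ s(u, v), a ∈ B) ∨ s(u, v) ∈ IB then zB else 0)) ∧
    (∀ u v : V, s(u, v) ∈ F₀ →
      y u + y v = y₀ u + y₀ v +
        (if (∀ a ∈ s(u, v), a ∈ B) ∨ s(u, v) ∈ IB then zB else 0) +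
        (if some s(u, v) = ζ ∨ some s(u, v) = η then zB / 2 else 0)) :=
  stmt_4_general ℰ hE orig f haux1 F₀ hF₀E hfac B hδ η ζ hη hζnull hζ y₀ zB hzB hzBeven
end

section
/- Let F̂ be an edge set of a finite simple graph, X a vertex set, η(X) either null or an edge of δ(X), and I(X) := δ_{F̂}(X) △ {η(X)}. Then for every alternating walk ρ with respect to F̂ of length at least 2, Diff(ρ, X, F̂) ≥ −1; moreover, if Diff(ρ, X, F̂) = −1, then either ρ contains the edge η(X), or all edges of ρ lie in γ(X) ∪ I(X). -/
/-!
Write `χ v ∈ {0, 1}` for membership of a vertex in `X` and `σ e = ±1` according as `e ∈ F̂` or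
not. A case check shows that an edge `e = vw` contributes
`2 · diff e = |χ v - χ w| + σ e · (χ v + χ w) - 2 [e = η(X)]` to `2 · Diff(ρ, X, F̂)`.
Along an alternating walk `σ` changes sign at every inner vertex, so the middle terms telescope to
`σ(first edge) · χ(start) + σ(last edge) · χ(end) ≥ -2`. The first terms are nonnegative except at
`η(X)`, which crosses `X`, occurs at most once on the walk and contributes `-1`. Hence
`2 · Diff ≥ -3`. If `Diff = -1` and `η(X)` is not on the walk, then no edge of the walk crosses `X`
and the walk starts in `X`, so it never leaves `X`.
-/

open Finset
open scoped Classical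

section Weights

variable {α V : Type*} [DecidableEq α] [DecidableEq V]

def diffWeight (Fh gamI : Finset α) (e : α) : ℤ :=
  if e ∈ gamI then if e ∈ Fh then 1 else -1 else 0

def edgeSign (Fh : Finset α) (e : α) : ℤ := if e ∈ Fh then 1 else -1

def memIndicator (X : Finset V) (v : V) : ℤ := if v ∈ X then 1 else 0

theorem card_inter_inter_sub_card_sdiff_eq_sum_diffWeight (ρ Fh gamI : Finset α) :
    ((ρ ∩ Fh ∩ gamI).card : ℤ) - (((ρ ∩ gamI) \ Fh).card : ℤ) =
      ∑ e ∈ ρ, diffWeight Fh gamI e := by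
  have hpos : ρ ∩ Fh ∩ gamI = ρ.filter (fun e => e ∈ gamI ∧ e ∈ Fh) := by
    ext; simp only [mem_inter, mem_filter]; tauto
  have hneg : (ρ ∩ gamI) \ Fh = ρ.filter (fun e => e ∈ gamI ∧ e ∉ Fh) := by
    ext; simp only [mem_sdiff, mem_inter, mem_filter]; tauto
  rw [hpos, hneg, card_filter, card_filter]
  push_cast
  rw [← sum_sub_distrib]
  refine sum_congr rfl fun e _ => ?_
  unfold diffWeight
  split_ifs <;> simp_all

theorem two_mul_diffWeight_eq {Fh gamI : Finset α} {X : Finset V} {η : Option α} {e : α}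
    {a b : V}
    (hgamI : e ∈ gamI ↔ (a ∈ X ∧ b ∈ X) ∨ Xor (e ∈ Fh ∧ Xor (a ∈ X) (b ∈ X)) (η = some e))
    (hη : η = some e → Xor (a ∈ X) (b ∈ X)) :
    2 * diffWeight Fh gamI e =
      |memIndicator X a - memIndicator X b| + edgeSign Fh e * (memIndicator X a + memIndicator X b)
        - 2 * if η = some e then 1 else 0 := by
  by_cases ha : a ∈ X <;> by_cases hb : b ∈ X <;> by_cases hF : e ∈ Fh <;>
    by_cases he : η = some e <;> simp_all [diffWeight, edgeSign, memIndicator, xor_def]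

theorem ite_le_abs_sub_memIndicator {p : Prop} [Decidable p] {X : Finset V} {a b : V}
    (h : p → Xor (a ∈ X) (b ∈ X)) :
    (if p then 1 else 0 : ℤ) ≤ |memIndicator X a - memIndicator X b| := by
  by_cases hp : p
  · rcases h hp with ⟨ha, hb⟩ | ⟨hb, ha⟩ <;> simp [hp, memIndicator, ha, hb]
  · simp [hp]

theorem neg_one_le_edgeSign_mul_memIndicator (Fh : Finset α) (X : Finset V) (e : α) (v : V) :
    -1 ≤ edgeSign Fh e * memIndicator X v := by
  unfold edgeSign memIndicator
  split_ifs <;> norm_num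

theorem mem_of_edgeSign_mul_memIndicator_eq_neg_one {Fh : Finset α} {X : Finset V} {e : α}
    {v : V} (h : edgeSign Fh e * memIndicator X v = -1) : v ∈ X := by
  unfold edgeSign memIndicator at h
  split_ifs at h <;> simp_all

end Weights

theorem sum_range_succ_mul_add_of_alternating (σ x : ℕ → ℤ) (n : ℕ)
    (hσ : ∀ i < n, σ (i + 1) = -σ i) :
    ∑ i ∈ range (n + 1), σ i * (x i + x (i + 1)) = σ 0 * x 0 + σ n * x (n + 1) := by
  induction n with
  | zero => simp only [zero_add, sum_range_one]; ring
  | succ n ih =>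
    rw [sum_range_succ, ih fun i hi => hσ i (by omega), hσ n (by omega)]
    ring

theorem eq_apply_zero_of_sum_abs_sub_eq_zero {x : ℕ → ℤ} {m : ℕ}
    (h : ∑ i ∈ range m, |x i - x (i + 1)| = 0) {i : ℕ} (hi : i ≤ m) : x i = x 0 := by
  have hzero := (sum_eq_zero_iff_of_nonneg fun i _ => abs_nonneg (x i - x (i + 1))).1 h
  induction i with
  | zero => rfl
  | succ i ih =>
    rw [← ih (by omega), eq_comm, ← sub_eq_zero, ← abs_eq_zero]
    exact hzero i (mem_range.2 (by omega))

theorem exists_mem_and_exists_not_mem_mk_iff {V : Type*} {X : Finset V} {a b : V} :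
    ((∃ c ∈ s(a, b), c ∈ X) ∧ ∃ c ∈ s(a, b), c ∉ X) ↔ Xor (a ∈ X) (b ∈ X) := by
  simp only [Sym2.mem_iff, exists_eq_or_imp, exists_eq_left, xor_def]
  tauto

/-- `gamI` meets `ℰ` in `γ(X) ∪ (δ_{F̂}(X) △ {η(X)})`. -/
def IsGammaUnionI {V : Type*} (ℰ Fh gamI : Finset (Sym2 V)) (X : Finset V)
    (η : Option (Sym2 V)) : Prop :=
  ∀ a b, s(a, b) ∈ ℰ → (s(a, b) ∈ gamI ↔
    (a ∈ X ∧ b ∈ X) ∨ Xor (s(a, b) ∈ Fh ∧ Xor (a ∈ X) (b ∈ X)) (η = some s(a, b)))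

theorem isGammaUnionI_of_eq {V : Type*} [Fintype V] [DecidableEq V]
    {ℰ Fh IX gamI : Finset (Sym2 V)} {X : Finset V} {η : Option (Sym2 V)}
    (hIX : IX = ((Fh.filter (fun e => (∃ a ∈ e, a ∈ X) ∧ ∃ a ∈ e, a ∉ X)) \ η.toFinset) ∪
           (η.toFinset \ (Fh.filter (fun e => (∃ a ∈ e, a ∈ X) ∧ ∃ a ∈ e, a ∉ X))))
    (hgamI : gamI = ℰ.filter (fun e => ∀ a ∈ e, a ∈ X) ∪ IX) :
    IsGammaUnionI ℰ Fh gamI X η := by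
  intro a b hab
  subst hIX hgamI
  simp only [mem_union, mem_filter, mem_sdiff, Option.mem_toFinset, Option.mem_def,
    Sym2.mem_iff, forall_eq_or_imp, forall_eq, exists_eq_or_imp, exists_eq_left, hab, true_and,
    xor_def]
  tauto

section Walk

variable {V : Type*} [DecidableEq V] {ℰ Fh gamI : Finset (Sym2 V)} {X : Finset V}
  {η : Option (Sym2 V)} {n : ℕ} {u : ℕ → V}

theorem two_mul_sum_diffWeight_eq (hgamI : IsGammaUnionI ℰ Fh gamI X η)
    (hη : ∀ a b, η = some s(a, b) → Xor (a ∈ X) (b ∈ X))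
    (hedges : ∀ i < n + 1, s(u i, u (i + 1)) ∈ ℰ)
    (halt : ∀ i < n, Xor (s(u i, u (i + 1)) ∈ Fh) (s(u (i + 1), u (i + 2)) ∈ Fh)) :
    2 * ∑ i ∈ range (n + 1), diffWeight Fh gamI s(u i, u (i + 1)) =
      ∑ i ∈ range (n + 1), (|memIndicator X (u i) - memIndicator X (u (i + 1))|
          - 2 * if η = some s(u i, u (i + 1)) then 1 else 0)
        + (edgeSign Fh s(u 0, u 1) * memIndicator X (u 0)
          + edgeSign Fh s(u n, u (n + 1)) * memIndicator X (u (n + 1))) := by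
  have hsign : ∀ i < n,
      edgeSign Fh s(u (i + 1), u (i + 1 + 1)) = -edgeSign Fh s(u i, u (i + 1)) := by
    intro i hi
    rcases halt i hi with ⟨h, h'⟩ | ⟨h, h'⟩ <;> simp [edgeSign, h, h']
  rw [← sum_range_succ_mul_add_of_alternating (fun i => edgeSign Fh s(u i, u (i + 1)))
    (fun i => memIndicator X (u i)) n hsign, mul_sum, ← sum_add_distrib]
  refine sum_congr rfl fun i hi => ?_
  rw [two_mul_diffWeight_eq (hgamI _ _ (hedges i (mem_range.1 hi))) (hη _ _)]
  ring

theorem neg_one_le_sum_diffWeight (hgamI : IsGammaUnionI ℰ Fh gamI X η)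
    (hη : ∀ a b, η = some s(a, b) → Xor (a ∈ X) (b ∈ X))
    (hedges : ∀ i < n + 1, s(u i, u (i + 1)) ∈ ℰ)
    (hdist : ∀ i < n + 1, ∀ j < n + 1, s(u i, u (i + 1)) = s(u j, u (j + 1)) → i = j)
    (halt : ∀ i < n, Xor (s(u i, u (i + 1)) ∈ Fh) (s(u (i + 1), u (i + 2)) ∈ Fh)) :
    -1 ≤ ∑ i ∈ range (n + 1), diffWeight Fh gamI s(u i, u (i + 1)) := by
  have key := two_mul_sum_diffWeight_eq hgamI hη hedges halt
  have hη_once : ((range (n + 1)).filter fun i => η = some s(u i, u (i + 1))).card ≤ 1 :=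
    card_le_one.2 fun i hi j hj => by
      simp only [mem_filter, mem_range] at hi hj
      exact hdist i hi.1 j hj.1 (Option.some.inj (hi.2.symm.trans hj.2))
  have hcross : -1 ≤ ∑ i ∈ range (n + 1), (|memIndicator X (u i) - memIndicator X (u (i + 1))|
      - 2 * if η = some s(u i, u (i + 1)) then 1 else 0) :=
    calc -1 ≤ -(((range (n + 1)).filter fun i => η = some s(u i, u (i + 1))).card : ℤ) := by
          omega
      _ = ∑ i ∈ range (n + 1), -(if η = some s(u i, u (i + 1)) then 1 else 0 : ℤ) := by
          rw [sum_neg_distrib, sum_boole]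
      _ ≤ _ := sum_le_sum fun i _ => by
          linarith [ite_le_abs_sub_memIndicator (X := X) (hη (u i) (u (i + 1)))]
  have hstart := neg_one_le_edgeSign_mul_memIndicator Fh X s(u 0, u 1) (u 0)
  have hend := neg_one_le_edgeSign_mul_memIndicator Fh X s(u n, u (n + 1)) (u (n + 1))
  omega

theorem exists_or_forall_mem_of_sum_diffWeight_eq_neg_one (hgamI : IsGammaUnionI ℰ Fh gamI X η)
    (hη : ∀ a b, η = some s(a, b) → Xor (a ∈ X) (b ∈ X))
    (hedges : ∀ i < n + 1, s(u i, u (i + 1)) ∈ ℰ)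
    (halt : ∀ i < n, Xor (s(u i, u (i + 1)) ∈ Fh) (s(u (i + 1), u (i + 2)) ∈ Fh))
    (hsum : ∑ i ∈ range (n + 1), diffWeight Fh gamI s(u i, u (i + 1)) = -1) :
    (∃ i < n + 1, η = some s(u i, u (i + 1))) ∨ ∀ i < n + 1, s(u i, u (i + 1)) ∈ gamI := by
  refine or_iff_not_imp_left.2 fun hηw => ?_
  push Not at hηw
  have key := two_mul_sum_diffWeight_eq hgamI hη hedges halt
  have hcross : ∑ i ∈ range (n + 1), (|memIndicator X (u i) - memIndicator X (u (i + 1))|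
      - 2 * if η = some s(u i, u (i + 1)) then 1 else 0) =
        ∑ i ∈ range (n + 1), |memIndicator X (u i) - memIndicator X (u (i + 1))| :=
    sum_congr rfl fun i hi => by simp [hηw i (mem_range.1 hi)]
  have habs : 0 ≤ ∑ i ∈ range (n + 1), |memIndicator X (u i) - memIndicator X (u (i + 1))| :=
    sum_nonneg fun _ _ => abs_nonneg _
  have hstart := neg_one_le_edgeSign_mul_memIndicator Fh X s(u 0, u 1) (u 0)
  have hend := neg_one_le_edgeSign_mul_memIndicator Fh X s(u n, u (n + 1)) (u (n + 1))
  have hu₀ : u 0 ∈ X :=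
    mem_of_edgeSign_mul_memIndicator_eq_neg_one (Fh := Fh) (e := s(u 0, u 1)) (by omega)
  have hX : ∀ i ≤ n + 1, u i ∈ X := fun i hi => by
    have := eq_apply_zero_of_sum_abs_sub_eq_zero (x := fun i => memIndicator X (u i)) (by omega) hi
    simpa [memIndicator, hu₀] using this
  exact fun i hi => (hgamI _ _ (hedges i hi)).2 (Or.inl ⟨hX i (by omega), hX (i + 1) (by omega)⟩)

end Walk

theorem stmt_5_general {V : Type*} [Fintype V] [DecidableEq V]
    (ℰ : Finset (Sym2 V))
    (Fh : Finset (Sym2 V))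
    (X : Finset V) (η : Option (Sym2 V))
    (hη : ∀ e ∈ η, e ∈ ℰ ∧ (∃ a ∈ e, a ∈ X) ∧ ∃ a ∈ e, a ∉ X)
    (l : ℕ) (hl : 2 ≤ l) (u : ℕ → V)
    (hedges : ∀ i < l, s(u i, u (i + 1)) ∈ ℰ)
    (hdist : ∀ i < l, ∀ j < l, s(u i, u (i + 1)) = s(u j, u (j + 1)) → i = j)
    (halt : ∀ i, i + 1 < l → Xor' (s(u i, u (i + 1)) ∈ Fh) (s(u (i + 1), u (i + 2)) ∈ Fh)) :
    ∀ IX gamI ρ : Finset (Sym2 V),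
      IX = ((Fh.filter (fun e => (∃ a ∈ e, a ∈ X) ∧ ∃ a ∈ e, a ∉ X)) \ η.toFinset) ∪
           (η.toFinset \ (Fh.filter (fun e => (∃ a ∈ e, a ∈ X) ∧ ∃ a ∈ e, a ∉ X))) →
      gamI = ℰ.filter (fun e => ∀ a ∈ e, a ∈ X) ∪ IX →
      ρ = (Finset.range l).image (fun i => s(u i, u (i + 1))) →
      (-1 : ℤ) ≤ ((ρ ∩ Fh ∩ gamI).card : ℤ) - (((ρ ∩ gamI) \ Fh).card : ℤ) ∧
      (((ρ ∩ Fh ∩ gamI).card : ℤ) - (((ρ ∩ gamI) \ Fh).card : ℤ) = -1 →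
        (∃ e ∈ η, e ∈ ρ) ∨ ∀ e ∈ ρ, e ∈ gamI) := by
  intro IX gamI ρ hIX hgamI hρ
  obtain ⟨n, rfl⟩ : ∃ n, l = n + 1 := ⟨l - 1, by omega⟩
  have hgam := isGammaUnionI_of_eq hIX hgamI
  have hcross a b (h : η = some s(a, b)) : Xor (a ∈ X) (b ∈ X) :=
    exists_mem_and_exists_not_mem_mk_iff.1 (hη _ h).2
  have halt' : ∀ i < n, Xor (s(u i, u (i + 1)) ∈ Fh) (s(u (i + 1), u (i + 2)) ∈ Fh) :=
    fun i hi => halt i (by omega)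
  have hinj : Set.InjOn (fun i => s(u i, u (i + 1))) (range (n + 1)) :=
    fun i hi j hj => hdist i (mem_range.1 hi) j (mem_range.1 hj)
  rw [card_inter_inter_sub_card_sdiff_eq_sum_diffWeight, hρ, sum_image hinj]
  refine ⟨neg_one_le_sum_diffWeight hgam hcross hedges hdist halt', fun hsum => ?_⟩
  rcases exists_or_forall_mem_of_sum_diffWeight_eq_neg_one hgam hcross hedges halt' hsum with
    ⟨i, hi, hηi⟩ | hall
  · exact Or.inl ⟨_, hηi, mem_image_of_mem _ (mem_range.2 hi)⟩
  · exact Or.inr (forall_mem_image.2 fun i hi => hall i (mem_range.1 hi))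

/-- Let `F̂` be an edge set, `X` a vertex set, `η(X)` null or
an edge of `δ(X)`, and `I(X) = δ_{F̂}(X) △ {η(X)}`.  Then for every alternating
walk `ρ` (with respect to `F̂`, pairwise distinct edges) of length at least 2,
`Diff(ρ, X, F̂) ≥ −1`; moreover, if equality holds, then either `ρ` contains
the edge `η(X)`, or all edges of `ρ` lie in `γ(X) ∪ I(X)`. -/
theorem stmt_5 {V : Type*} [Fintype V] [DecidableEq V]
    (ℰ : Finset (Sym2 V)) (hE : ∀ e ∈ ℰ, ¬ e.IsDiag)
    (Fh : Finset (Sym2 V)) (hFh : Fh ⊆ ℰ)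
    (X : Finset V) (η : Option (Sym2 V))
    (hη : ∀ e ∈ η, e ∈ ℰ ∧ (∃ a ∈ e, a ∈ X) ∧ ∃ a ∈ e, a ∉ X)
    (l : ℕ) (hl : 2 ≤ l) (u : ℕ → V)
    (hedges : ∀ i < l, s(u i, u (i + 1)) ∈ ℰ)
    (hdist : ∀ i < l, ∀ j < l, s(u i, u (i + 1)) = s(u j, u (j + 1)) → i = j)
    (halt : ∀ i, i + 1 < l → Xor' (s(u i, u (i + 1)) ∈ Fh) (s(u (i + 1), u (i + 2)) ∈ Fh)) :
    ∀ IX gamI ρ : Finset (Sym2 V),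
      IX = ((Fh.filter (fun e => (∃ a ∈ e, a ∈ X) ∧ ∃ a ∈ e, a ∉ X)) \ η.toFinset) ∪
           (η.toFinset \ (Fh.filter (fun e => (∃ a ∈ e, a ∈ X) ∧ ∃ a ∈ e, a ∉ X))) →
      gamI = ℰ.filter (fun e => ∀ a ∈ e, a ∈ X) ∪ IX →
      ρ = (Finset.range l).image (fun i => s(u i, u (i + 1))) →
      (-1 : ℤ) ≤ ((ρ ∩ Fh ∩ gamI).card : ℤ) - (((ρ ∩ gamI) \ Fh).card : ℤ) ∧
      (((ρ ∩ Fh ∩ gamI).card : ℤ) - (((ρ ∩ gamI) \ Fh).card : ℤ) = -1 →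
        (∃ e ∈ η, e ∈ ρ) ∨ ∀ e ∈ ρ, e ∈ gamI) :=
  stmt_5_general ℰ Fh X η hη l hl u hedges hdist halt
end

section
/- Let F̂ be an edge set of a finite simple graph, X a vertex set, η(X) either null or an edge of δ(X), and I(X) := δ_{F̂}(X) △ {η(X)}. Let ρ be an alternating walk with respect to F̂ of length at least 2 such that neither of the two terminal edges of ρ belongs to (γ(X) ∪ I(X)) \ F̂. Then Diff(ρ, X, F̂) ≥ 0. -/
/-!
Every edge of `ρ` in `(γ(X) ∪ I(X)) \ F̂` is interior to the walk, hence flanked by two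
`F̂`-edges, and it has both ends in `X` unless it is `η(X)`, which has one end in `X`.
An `F̂`-edge of the walk with an end in `X` lies in `γ(X) ∪ I(X)` unless it is `η(X)`.
So each such edge can be sent to an `F̂`-neighbour through an end in `X`: to the left
before the position of `η(X)` on the walk, to the right after it. This map is injective.
-/

open Finset
open scoped Classical symmDiff

theorem pos_and_succ_lt_and_of_xor {F P : ℕ → Prop} {l i : ℕ}
    (hF : ∀ j, j + 1 < l → Xor (F j) (F (j + 1))) (h0 : ¬ P 0) (hl : ∀ j, j + 1 = l → ¬ P j)
    (hi : i < l) (hPi : P i) (hFi : ¬ F i) :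
    0 < i ∧ i + 1 < l ∧ F (i - 1) ∧ F (i + 1) := by
  have hi0 : 0 < i := Nat.pos_of_ne_zero fun h => h0 (h ▸ hPi)
  have hil : i + 1 < l := lt_of_le_of_ne hi fun h => hl i h hPi
  obtain ⟨j, rfl⟩ : ∃ j, i = j + 1 := ⟨i - 1, by omega⟩
  exact ⟨hi0, hil, (hF j hi).or.resolve_right hFi, (hF (j + 1) hil).or.resolve_left hFi⟩

theorem card_le_card_of_flanking {B G : Finset ℕ} {l p : ℕ} {F x : ℕ → Prop}
    (hB : ∀ i ∈ B, 0 < i ∧ i + 1 < l ∧ F (i - 1) ∧ F (i + 1))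
    (hBx : ∀ i ∈ B, i ≠ p → x i ∧ x (i + 1))
    (hBp : p ∈ B → x p ∨ x (p + 1))
    (hG : ∀ i < l, F i → i ≠ p → (x i ∨ x (i + 1)) → i ∈ G) :
    #B ≤ #G := by
  have hp_of_not : ∀ i ∈ B, ¬ x i → i = p := fun i hi hx => by_contra fun h => hx (hBx i hi h).1
  -- Only `p` can have its left end outside `x`, so a left-moving `i ≤ p` and a
  -- right-moving `i - 2` never collide.
  refine card_le_card_of_injOn (fun i => if i ≤ p ∧ x i then i - 1 else i + 1)
    (fun i hi => ?_) (fun i hi j hj hij => ?_)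
  · rw [mem_coe] at hi ⊢
    obtain ⟨hi0, hil, hFl, hFr⟩ := hB i hi
    dsimp only
    split_ifs with hc
    · refine hG _ (by omega) hFl (by omega) (Or.inr ?_)
      rw [Nat.sub_add_cancel hi0]
      exact hc.2
    · refine hG _ hil hFr (fun h => ?_) (Or.inl ?_)
      · have := hp_of_not i hi fun hx => hc ⟨by omega, hx⟩
        omega
      · obtain rfl | hip := eq_or_ne i p
        · exact (hBp hi).resolve_left fun hx => hc ⟨le_rfl, hx⟩
        · exact (hBx i hi hip).2
  · rw [mem_coe] at hi hj
    have := (hB i hi).1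
    have := (hB j hj).1
    dsimp only at hij
    split_ifs at hij with hci hcj hcj
    · omega
    · have := hp_of_not j hj fun hx => hcj ⟨by omega, hx⟩
      omega
    · have := hp_of_not i hi fun hx => hci ⟨by omega, hx⟩
      omega
    · omega

theorem card_image_inter_eq_card_filter {α β : Type*} [DecidableEq β] {f : α → β} {s : Finset α}
    (hf : Set.InjOn f s) (t : Finset β) : #(s.image f ∩ t) = #(s.filter (f · ∈ t)) := by
  rw [← filter_mem_eq_inter, filter_image, card_image_of_injOn (hf.mono (filter_subset _ _))]

theorem exists_forall_mem_imp_eq {α : Type*} {f : ℕ → α} {l : ℕ}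
    (hf : ∀ i < l, ∀ j < l, f i = f j → i = j) (o : Option α) :
    ∃ p, ∀ i < l, f i ∈ o → i = p := by
  by_cases h : ∃ i < l, f i ∈ o
  · obtain ⟨p, hp, hpo⟩ := h
    exact ⟨p, fun i hi hio => hf i hi p hp (Option.mem_unique hio hpo)⟩
  · exact ⟨0, fun i hi hio => (h ⟨i, hi, hio⟩).elim⟩

section EdgeSets

variable {V : Type*} [DecidableEq V]

noncomputable def boundaryEdges (F : Finset (Sym2 V)) (X : Finset V) : Finset (Sym2 V) :=
  F.filter fun e => (∃ a ∈ e, a ∈ X) ∧ ∃ a ∈ e, a ∉ X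

noncomputable def insideEdges (E : Finset (Sym2 V)) (X : Finset V) : Finset (Sym2 V) :=
  E.filter fun e => ∀ a ∈ e, a ∈ X

variable {E F : Finset (Sym2 V)} {X : Finset V} {η : Option (Sym2 V)} {v w : V}

theorem mem_and_mem_or_mem_of_mem_insideEdges_union
    (he : s(v, w) ∈ insideEdges E X ∪ boundaryEdges F X ∆ η.toFinset) (hF : s(v, w) ∉ F) :
    (v ∈ X ∧ w ∈ X) ∨ s(v, w) ∈ η := by
  simp only [insideEdges, boundaryEdges, mem_union, mem_symmDiff, mem_filter,
    Option.mem_toFinset, Sym2.mem_iff, forall_eq_or_imp, forall_eq] at he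
  tauto

theorem mem_insideEdges_union (hE : s(v, w) ∈ E) (hF : s(v, w) ∈ F) (hη : s(v, w) ∉ η)
    (hX : v ∈ X ∨ w ∈ X) : s(v, w) ∈ insideEdges E X ∪ boundaryEdges F X ∆ η.toFinset := by
  simp only [insideEdges, boundaryEdges, mem_union, mem_symmDiff, mem_filter,
    Option.mem_toFinset, Sym2.mem_iff, forall_eq_or_imp, forall_eq, exists_eq_or_imp,
    exists_eq_left]
  tauto

end EdgeSets

theorem stmt_6_general {V : Type*} [Fintype V] [DecidableEq V]
    (ℰ : Finset (Sym2 V))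
    (Fh : Finset (Sym2 V))
    (X : Finset V) (η : Option (Sym2 V))
    (hη : ∀ e ∈ η, e ∈ ℰ ∧ (∃ a ∈ e, a ∈ X) ∧ ∃ a ∈ e, a ∉ X)
    (l : ℕ) (u : ℕ → V)
    (hedges : ∀ i < l, s(u i, u (i + 1)) ∈ ℰ)
    (hdist : ∀ i < l, ∀ j < l, s(u i, u (i + 1)) = s(u j, u (j + 1)) → i = j)
    (halt : ∀ i, i + 1 < l → Xor' (s(u i, u (i + 1)) ∈ Fh) (s(u (i + 1), u (i + 2)) ∈ Fh)) :
    ∀ IX gamI ρ : Finset (Sym2 V),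
      IX = ((Fh.filter (fun e => (∃ a ∈ e, a ∈ X) ∧ ∃ a ∈ e, a ∉ X)) \ η.toFinset) ∪
           (η.toFinset \ (Fh.filter (fun e => (∃ a ∈ e, a ∈ X) ∧ ∃ a ∈ e, a ∉ X))) →
      gamI = ℰ.filter (fun e => ∀ a ∈ e, a ∈ X) ∪ IX →
      ρ = (Finset.range l).image (fun i => s(u i, u (i + 1))) →
      s(u 0, u 1) ∉ gamI \ Fh →
      s(u (l - 1), u l) ∉ gamI \ Fh →
      (0 : ℤ) ≤ ((ρ ∩ Fh ∩ gamI).card : ℤ) - (((ρ ∩ gamI) \ Fh).card : ℤ) := by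
  rintro IX gamI ρ rfl hgam rfl h0 hl1
  replace hgam : gamI = insideEdges ℰ X ∪ boundaryEdges Fh X ∆ η.toFinset := by
    ext
    simp only [hgam, insideEdges, boundaryEdges, mem_union, mem_symmDiff, mem_sdiff, mem_filter]
  have hinj : Set.InjOn (fun i => s(u i, u (i + 1))) (range l) :=
    fun i hi j hj h => hdist i (mem_range.1 hi) j (mem_range.1 hj) h
  obtain ⟨p, hp⟩ := exists_forall_mem_imp_eq hdist η
  rw [inter_assoc, inter_sdiff_assoc, card_image_inter_eq_card_filter hinj,
    card_image_inter_eq_card_filter hinj, sub_nonneg, Nat.cast_le]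
  have hbad : ∀ i ∈ (range l).filter (fun i => s(u i, u (i + 1)) ∈ gamI \ Fh),
      (u i ∈ X ∧ u (i + 1) ∈ X) ∨ s(u i, u (i + 1)) ∈ η := by
    intro i hi
    rw [mem_filter, mem_sdiff, hgam] at hi
    exact mem_and_mem_or_mem_of_mem_insideEdges_union hi.2.1 hi.2.2
  refine card_le_card_of_flanking (l := l) (p := p) (x := (u · ∈ X))
    (F := fun i => s(u i, u (i + 1)) ∈ Fh) (fun i hi => ?_)
    (fun i hi hip => (hbad i hi).resolve_right
      fun h => hip (hp i (mem_range.1 (mem_filter.1 hi).1) h))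
    (fun hpB => (hbad p hpB).elim (fun hX => Or.inl hX.1) fun h => by simpa using (hη _ h).2.1)
    (fun i hil hF hip hX => ?_)
  · obtain ⟨hil, hbadi⟩ := mem_filter.1 hi
    refine pos_and_succ_lt_and_of_xor (P := fun i => s(u i, u (i + 1)) ∈ gamI \ Fh) halt h0
      (fun j hj => ?_) (mem_range.1 hil) hbadi (mem_sdiff.1 hbadi).2
    subst hj
    simpa using hl1
  · rw [mem_filter, mem_range, mem_inter, hgam]
    exact ⟨hil, hF, mem_insideEdges_union (hedges i hil) hF (fun h => hip (hp i hil h)) hX⟩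

/-- Let `F̂` be an edge set, `X` a vertex set, `η(X)` null or
an edge of `δ(X)`, and `I(X) = δ_{F̂}(X) △ {η(X)}`.  If `ρ` is an alternating
walk (with respect to `F̂`, pairwise distinct edges) of length at least 2 such
that neither terminal edge of `ρ` belongs to `(γ(X) ∪ I(X)) \ F̂`, then
`Diff(ρ, X, F̂) ≥ 0`. -/
theorem stmt_6 {V : Type*} [Fintype V] [DecidableEq V]
    (ℰ : Finset (Sym2 V)) (hE : ∀ e ∈ ℰ, ¬ e.IsDiag)
    (Fh : Finset (Sym2 V)) (hFh : Fh ⊆ ℰ)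
    (X : Finset V) (η : Option (Sym2 V))
    (hη : ∀ e ∈ η, e ∈ ℰ ∧ (∃ a ∈ e, a ∈ X) ∧ ∃ a ∈ e, a ∉ X)
    (l : ℕ) (hl : 2 ≤ l) (u : ℕ → V)
    (hedges : ∀ i < l, s(u i, u (i + 1)) ∈ ℰ)
    (hdist : ∀ i < l, ∀ j < l, s(u i, u (i + 1)) = s(u j, u (j + 1)) → i = j)
    (halt : ∀ i, i + 1 < l → Xor' (s(u i, u (i + 1)) ∈ Fh) (s(u (i + 1), u (i + 2)) ∈ Fh)) :
    ∀ IX gamI ρ : Finset (Sym2 V),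
      IX = ((Fh.filter (fun e => (∃ a ∈ e, a ∈ X) ∧ ∃ a ∈ e, a ∉ X)) \ η.toFinset) ∪
           (η.toFinset \ (Fh.filter (fun e => (∃ a ∈ e, a ∈ X) ∧ ∃ a ∈ e, a ∉ X))) →
      gamI = ℰ.filter (fun e => ∀ a ∈ e, a ∈ X) ∪ IX →
      ρ = (Finset.range l).image (fun i => s(u i, u (i + 1))) →
      s(u 0, u 1) ∉ gamI \ Fh →
      s(u (l - 1), u l) ∉ gamI \ Fh →
      (0 : ℤ) ≤ ((ρ ∩ Fh ∩ gamI).card : ℤ) - (((ρ ∩ gamI) \ Fh).card : ℤ) :=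
  stmt_6_general ℰ Fh X η hη l u hedges hdist halt
end

section
/- Let F₀ and F be f-factors of the blowup graph 𝒢, and let e_u be an auxiliary vertex whose two incident edges are η=(u,e_u) and ζ=(e_u,e_v). Let 𝒲 be a family of pairwise edge-disjoint augmenting walks of F₀⊕F, i.e., alternating walks with respect to F all of whose edges lie in F₀⊕F and whose two terminal edges are not in F. Then at most one walk ρ∈𝒲 satisfies ρ ∩ {η, ζ} ≠ ∅. -/
/-!
An auxiliary vertex `e_u` has `f(e_u) = 1` and only the two incident edges `η, ζ`. If a walk of
the family uses one of them and that edge lies in `F`, then it is not a terminal edge, so the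
walk passes through `e_u` and, its edges being distinct, also uses the other one; edge-disjointness
then leaves no room for a second walk. Otherwise the edges used by two different walks are two
distinct edges of `F₀ \ F` at `e_u`, which exceeds `f(e_u) = 1` in `F₀`.
-/

open Finset

section Walks

variable {V : Type*} {w : ℕ → V} {n : ℕ}

theorem exists_ne_edge_mem_of_interior {k : ℕ} {x : V} (hk0 : k ≠ 0) (hkn : k + 1 < n)
    (hx : x ∈ s(w k, w (k + 1))) :
    ∃ k' < n, k' ≠ k ∧ x ∈ s(w k', w (k' + 1)) := by
  rcases Sym2.mem_iff.1 hx with rfl | rfl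
  · exact ⟨k - 1, by omega, by omega, by simp [Nat.sub_add_cancel (Nat.pos_of_ne_zero hk0)]⟩
  · exact ⟨k + 1, hkn, by omega, by simp⟩

variable [DecidableEq V]

def walkEdges (n : ℕ) (w : ℕ → V) : Finset (Sym2 V) :=
  (range n).image fun k => s(w k, w (k + 1))

theorem mem_walkEdges {e : Sym2 V} :
    e ∈ walkEdges n w ↔ ∃ k < n, s(w k, w (k + 1)) = e := by
  simp [walkEdges]

variable {S F : Finset (Sym2 V)} {x : V} {a b : Sym2 V}
  (hS : ∀ k < n, s(w k, w (k + 1)) ∈ S)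
  (hdist : ∀ j < n, ∀ k < n, s(w j, w (j + 1)) = s(w k, w (k + 1)) → j = k)
  (hterm : s(w 0, w 1) ∉ F ∧ s(w (n - 1), w n) ∉ F)
  (hx : S.filter (x ∈ ·) = {a, b})
include hS hdist hterm hx

theorem mem_walkEdges_of_incidence_eq_pair (haF : a ∈ F) (ha : a ∈ walkEdges n w) :
    b ∈ walkEdges n w := by
  obtain ⟨k, hk, rfl⟩ := mem_walkEdges.1 ha
  have hk0 : k ≠ 0 := by rintro rfl; exact hterm.1 haF
  have hkn : k + 1 < n := by
    by_contra! h
    obtain rfl : k = n - 1 := by omega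
    exact hterm.2 (by rwa [Nat.sub_add_cancel (by omega)] at haF)
  have hxa : x ∈ s(w k, w (k + 1)) := by
    have ha' := mem_insert_self (s(w k, w (k + 1))) {b}
    rw [← hx] at ha'
    exact (mem_filter.1 ha').2
  obtain ⟨k', hk', hne, hxk'⟩ := exists_ne_edge_mem_of_interior hk0 hkn hxa
  have hmem : s(w k', w (k' + 1)) ∈ S.filter (x ∈ ·) := mem_filter.2 ⟨hS k' hk', hxk'⟩
  rw [hx, mem_insert, mem_singleton] at hmem
  rcases hmem with hka | hkb
  · exact absurd (hdist k' hk' k hk hka) hne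
  · exact mem_walkEdges.2 ⟨k', hk', hkb⟩

theorem pair_subset_walkEdges {c : Sym2 V} (hc : c = a ∨ c = b) (hcF : c ∈ F)
    (hcw : c ∈ walkEdges n w) : {a, b} ⊆ walkEdges n w := by
  rcases hc with rfl | rfl
  · exact insert_subset hcw
      (singleton_subset_iff.2 (mem_walkEdges_of_incidence_eq_pair hS hdist hterm hx hcF hcw))
  · refine insert_subset ?_ (singleton_subset_iff.2 hcw)
    exact mem_walkEdges_of_incidence_eq_pair hS hdist hterm (hx.trans (pair_comm _ _)) hcF hcw

end Walks

theorem stmt_7_general {V : Type*} [DecidableEq V]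
    (ℰ : Finset (Sym2 V)) (f : V → ℕ)
    (F F₀ : Finset (Sym2 V)) (hFE : F ⊆ ℰ) (hF₀E : F₀ ⊆ ℰ)
    (hF₀fac : ∀ v : V, (F₀.filter (fun e => v ∈ e)).card ≤ f v)
    (u eu ev : V) (hfeu : f eu = 1)
    (hinc : ℰ.filter (fun e => eu ∈ e) = {s(u, eu), s(eu, ev)})
    (ι : Type*) (len : ι → ℕ) (w : ι → ℕ → V)
    (hedges : ∀ i, ∀ j < len i, s(w i j, w i (j + 1)) ∈ (F₀ \ F) ∪ (F \ F₀))
    (hdist : ∀ i, ∀ j < len i, ∀ k < len i,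
      s(w i j, w i (j + 1)) = s(w i k, w i (k + 1)) → j = k)
    (hterm : ∀ i, s(w i 0, w i 1) ∉ F ∧ s(w i (len i - 1), w i (len i)) ∉ F)
    (hdisj : ∀ i j, i ≠ j →
      Disjoint ((Finset.range (len i)).image fun k => s(w i k, w i (k + 1)))
        ((Finset.range (len j)).image fun k => s(w j k, w j (k + 1)))) :
    ∀ i j : ι,
      (∃ e ∈ (Finset.range (len i)).image fun k => s(w i k, w i (k + 1)),
        e = s(u, eu) ∨ e = s(eu, ev)) →
      (∃ e ∈ (Finset.range (len j)).image fun k => s(w j k, w j (k + 1)),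
        e = s(u, eu) ∨ e = s(eu, ev)) →
      i = j := by
  rintro i j ⟨a, ha, hai⟩ ⟨b, hb, hbj⟩
  by_contra hij
  have hS : ∀ t, ∀ k < len t, s(w t k, w t (k + 1)) ∈ ℰ := fun t k hk =>
    union_subset (sdiff_subset.trans hF₀E) (sdiff_subset.trans hFE) (hedges t k hk)
  have hab : a ≠ b := by
    rintro rfl; exact disjoint_left.1 (hdisj i j hij) ha hb
  have hF₀ : ∀ t t', t ≠ t' →
      ∀ c ∈ walkEdges (len t) (w t), (c = s(u, eu) ∨ c = s(eu, ev)) →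
      ∀ c' ∈ walkEdges (len t') (w t'), (c' = s(u, eu) ∨ c' = s(eu, ev)) → c ∈ F₀ := by
    intro t t' htt' c hc hcη c' hc' hc'η
    obtain ⟨k, hk, rfl⟩ := mem_walkEdges.1 hc
    have hcF : s(w t k, w t (k + 1)) ∉ F := fun hcF =>
      have hpair := pair_subset_walkEdges (hS t) (hdist t) (hterm t) hinc hcη hcF hc
      disjoint_left.1 (hdisj t t' htt') (hpair (by rcases hc'η with rfl | rfl <;> simp)) hc'
    simpa [hcF] using hedges t k hk
  have hat : a ∈ F₀.filter (eu ∈ ·) :=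
    mem_filter.2 ⟨hF₀ i j hij a ha hai b hb hbj, by rcases hai with rfl | rfl <;> simp⟩
  have hbt : b ∈ F₀.filter (eu ∈ ·) :=
    mem_filter.2 ⟨hF₀ j i (Ne.symm hij) b hb hbj a ha hai, by rcases hbj with rfl | rfl <;> simp⟩
  have htwo := card_le_card (insert_subset hat (singleton_subset_iff.2 hbt))
  rw [card_pair hab] at htwo
  linarith [hF₀fac eu]

/-- In the blowup graph, let `F₀, F` be `f`-factors and let
`e_u` be an auxiliary vertex (so `f(e_u) = 1`) whose two incident edges are
`η = (u, e_u)` and `ζ = (e_u, e_v)`.  For any family of pairwise edge-disjoint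
augmenting walks of `F₀ ⊕ F` (alternating walks with respect to `F` whose
edges lie in `F₀ ⊕ F` and whose terminal edges are not in `F`), at most one
walk of the family meets `{η, ζ}`. -/
theorem stmt_7 {V : Type*} [Fintype V] [DecidableEq V]
    (ℰ : Finset (Sym2 V)) (hE : ∀ e ∈ ℰ, ¬ e.IsDiag)
    (orig : Set V) (f : V → ℕ)
    (F F₀ : Finset (Sym2 V)) (hFE : F ⊆ ℰ) (hF₀E : F₀ ⊆ ℰ)
    (hFfac : ∀ v : V, (F.filter (fun e => v ∈ e)).card ≤ f v)
    (hF₀fac : ∀ v : V, (F₀.filter (fun e => v ∈ e)).card ≤ f v)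
    (u eu ev : V) (heu : eu ∉ orig) (hfeu : f eu = 1)
    (hinc : ℰ.filter (fun e => eu ∈ e) = {s(u, eu), s(eu, ev)})
    (ι : Type*) (len : ι → ℕ) (w : ι → ℕ → V)
    (hlen : ∀ i, 1 ≤ len i)
    (hedges : ∀ i, ∀ j < len i, s(w i j, w i (j + 1)) ∈ (F₀ \ F) ∪ (F \ F₀))
    (hdist : ∀ i, ∀ j < len i, ∀ k < len i,
      s(w i j, w i (j + 1)) = s(w i k, w i (k + 1)) → j = k)
    (halt : ∀ i, ∀ j, j + 1 < len i →
      Xor' (s(w i j, w i (j + 1)) ∈ F) (s(w i (j + 1), w i (j + 2)) ∈ F))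
    (hterm : ∀ i, s(w i 0, w i 1) ∉ F ∧ s(w i (len i - 1), w i (len i)) ∉ F)
    (hdisj : ∀ i j, i ≠ j →
      Disjoint ((Finset.range (len i)).image fun k => s(w i k, w i (k + 1)))
        ((Finset.range (len j)).image fun k => s(w j k, w j (k + 1)))) :
    ∀ i j : ι,
      (∃ e ∈ (Finset.range (len i)).image fun k => s(w i k, w i (k + 1)),
        e = s(u, eu) ∨ e = s(eu, ev)) →
      (∃ e ∈ (Finset.range (len j)).image fun k => s(w j k, w j (k + 1)),
        e = s(u, eu) ∨ e = s(eu, ev)) →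
      i = j :=
  stmt_7_general ℰ f F F₀ hFE hF₀E hF₀fac u eu ev hfeu hinc ι len w hedges hdist hterm hdisj
end

section
/- Let F be an f-factor of the blowup graph 𝒢 and let X ⊆ 𝒱 satisfy: (a) every edge of δ(X) joins an original vertex in X to an auxiliary vertex outside X; (b) X contains at most one F-unsaturated vertex, and if η(X) is not null then every vertex of X is F-saturated; here η(X) is either null or an edge of δ(X), and I(X) := δ_F(X) △ {η(X)}. Then there is at most one F-unsaturated vertex u of 𝒢 such that u ∈ X or u is an endpoint of some edge of γ(X) ∪ I(X). -/
open Finset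
open scoped Classical

/-!
An unsaturated vertex outside `X` cannot lie on an `F`-edge of `δ(X)`: by (a) it would be the
auxiliary endpoint of that edge, and an auxiliary vertex (capacity `1`) covered by an `F`-edge is
saturated. Hence every unsaturated vertex in question lies in `X` or is the outer endpoint of
`η(X)`. If `η(X)` is null the first case gives uniqueness by (b); otherwise `X` is saturated and
`η(X)` has exactly one endpoint outside `X`.
-/

theorem eq_right_of_mem_mk_of_notMem {V : Type*} {X : Finset V} {a x c : V} (ha : a ∈ X)
    (hc : c ∈ s(a, x)) (hcX : c ∉ X) : c = x := by
  rcases Sym2.mem_iff.mp hc with rfl | rfl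
  · exact absurd ha hcX
  · rfl

section BlowupFactor

variable {V : Type*} [DecidableEq V]

theorem card_filter_mem_eq_of_eq_one {F : Finset (Sym2 V)} {f : V → ℕ} {x : V} {e : Sym2 V}
    (hx : f x = 1) (hfac : (F.filter (fun e => x ∈ e)).card ≤ f x) (he : e ∈ F) (hxe : x ∈ e) :
    (F.filter (fun e => x ∈ e)).card = f x := by
  have : 0 < (F.filter (fun e => x ∈ e)).card := card_pos.mpr ⟨e, mem_filter.mpr ⟨he, hxe⟩⟩
  omega

theorem notMem_of_crossing_of_unsaturated {ℰ F : Finset (Sym2 V)} {orig : Set V} {f : V → ℕ}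
    {X : Finset V} (haux1 : ∀ v, v ∉ orig → f v = 1) (hFE : F ⊆ ℰ)
    (hfac : ∀ v : V, (F.filter (fun e => v ∈ e)).card ≤ f v)
    (hδ : ∀ e ∈ ℰ, ((∃ a ∈ e, a ∈ X) ∧ ∃ a ∈ e, a ∉ X) →
      ∃ a x, a ∈ X ∧ a ∈ orig ∧ x ∉ X ∧ x ∉ orig ∧ e = s(a, x))
    {c : V} (hc : (F.filter (fun e => c ∈ e)).card ≠ f c) (hcX : c ∉ X)
    {e : Sym2 V} (heF : e ∈ F) (hcross : (∃ a ∈ e, a ∈ X) ∧ ∃ a ∈ e, a ∉ X) : c ∉ e := by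
  intro hce
  obtain ⟨a, x, haX, -, -, hx, rfl⟩ := hδ e (hFE heF) hcross
  obtain rfl := eq_right_of_mem_mk_of_notMem haX hce hcX
  exact hc (card_filter_mem_eq_of_eq_one (haux1 c hx) (hfac c) heF hce)

end BlowupFactor

theorem stmt_8_general {V : Type*} [Fintype V] [DecidableEq V]
    (ℰ : Finset (Sym2 V))
    (orig : Set V) (f : V → ℕ)
    (haux1 : ∀ v, v ∉ orig → f v = 1)
    (F : Finset (Sym2 V)) (hFE : F ⊆ ℰ)
    (hfac : ∀ v : V, (F.filter (fun e => v ∈ e)).card ≤ f v)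
    (X : Finset V)
    (hδ : ∀ e ∈ ℰ, ((∃ a ∈ e, a ∈ X) ∧ ∃ a ∈ e, a ∉ X) →
      ∃ a x, a ∈ X ∧ a ∈ orig ∧ x ∉ X ∧ x ∉ orig ∧ e = s(a, x))
    (η : Option (Sym2 V))
    (hη : ∀ e ∈ η, e ∈ ℰ ∧ (∃ a ∈ e, a ∈ X) ∧ ∃ a ∈ e, a ∉ X)
    (hXunsat : ∀ a ∈ X, ∀ b ∈ X,
      (F.filter (fun e => a ∈ e)).card ≠ f a →
      (F.filter (fun e => b ∈ e)).card ≠ f b → a = b)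
    (hηsat : η ≠ none → ∀ a ∈ X, (F.filter (fun e => a ∈ e)).card = f a) :
    ∀ IX gamI : Finset (Sym2 V),
      IX = ((F.filter (fun e => (∃ a ∈ e, a ∈ X) ∧ ∃ a ∈ e, a ∉ X)) \ η.toFinset) ∪
           (η.toFinset \ (F.filter (fun e => (∃ a ∈ e, a ∈ X) ∧ ∃ a ∈ e, a ∉ X))) →
      gamI = ℰ.filter (fun e => ∀ a ∈ e, a ∈ X) ∪ IX →
      ∀ a b : V,
        (F.filter (fun e => a ∈ e)).card ≠ f a →
        (F.filter (fun e => b ∈ e)).card ≠ f b →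
        (a ∈ X ∨ ∃ e ∈ gamI, a ∈ e) →
        (b ∈ X ∨ ∃ e ∈ gamI, b ∈ e) →
        a = b := by
  intro IX gamI hIX hgamI a b ha hb haR hbR
  have outer : ∀ c, (F.filter (fun e => c ∈ e)).card ≠ f c →
      c ∉ X → (c ∈ X ∨ ∃ e ∈ gamI, c ∈ e) → ∃ e ∈ η, c ∈ e := by
    rintro c hc hcX (hcX' | ⟨e, he, hce⟩)
    · exact absurd hcX' hcX
    simp only [hgamI, hIX, mem_union, mem_filter, mem_sdiff, Option.mem_toFinset] at he
    rcases he with ⟨-, hγ⟩ | ⟨⟨heF, hcross⟩, -⟩ | ⟨heη, -⟩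
    · exact absurd (hγ c hce) hcX
    · exact absurd hce
        (notMem_of_crossing_of_unsaturated haux1 hFE hfac hδ hc hcX heF hcross)
    · exact ⟨e, heη, hce⟩
  by_cases haX : a ∈ X <;> by_cases hbX : b ∈ X
  · exact hXunsat a haX b hbX ha hb
  · obtain ⟨e, he, -⟩ := outer b hb hbX hbR
    exact absurd (hηsat (Option.ne_none_iff_exists'.mpr ⟨e, he⟩) a haX) ha
  · obtain ⟨e, he, -⟩ := outer a ha haX haR
    exact absurd (hηsat (Option.ne_none_iff_exists'.mpr ⟨e, he⟩) b hbX) hb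
  · obtain ⟨e, he, hae⟩ := outer a ha haX haR
    obtain ⟨e', he', hbe⟩ := outer b hb hbX hbR
    obtain rfl := Option.mem_unique he he'
    obtain ⟨heℰ, hcross⟩ := hη e he
    obtain ⟨a₀, x₀, ha₀, -, -, -, rfl⟩ := hδ e heℰ hcross
    exact (eq_right_of_mem_mk_of_notMem ha₀ hae haX).trans
      (eq_right_of_mem_mk_of_notMem ha₀ hbe hbX).symm

/-- In the blowup graph, let `F` be an `f`-factor and let
`X ⊆ 𝒱` satisfy: (a) every edge of `δ(X)` joins an original vertex in `X` to
an auxiliary vertex outside `X`; (b) `X` contains at most one `F`-unsaturated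
vertex, and if `η(X)` is not null then every vertex of `X` is `F`-saturated;
with `η(X)` null or an edge of `δ(X)` and `I(X) = δ_F(X) △ {η(X)}`.  Then
there is at most one `F`-unsaturated vertex `a` such that `a ∈ X` or `a` is an
endpoint of some edge of `γ(X) ∪ I(X)`. -/
theorem stmt_8 {V : Type*} [Fintype V] [DecidableEq V]
    (ℰ : Finset (Sym2 V)) (hE : ∀ e ∈ ℰ, ¬ e.IsDiag)
    (orig : Set V) (f : V → ℕ)
    (haux1 : ∀ v, v ∉ orig → f v = 1)
    (F : Finset (Sym2 V)) (hFE : F ⊆ ℰ)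
    (hfac : ∀ v : V, (F.filter (fun e => v ∈ e)).card ≤ f v)
    (X : Finset V)
    (hδ : ∀ e ∈ ℰ, ((∃ a ∈ e, a ∈ X) ∧ ∃ a ∈ e, a ∉ X) →
      ∃ a x, a ∈ X ∧ a ∈ orig ∧ x ∉ X ∧ x ∉ orig ∧ e = s(a, x))
    (η : Option (Sym2 V))
    (hη : ∀ e ∈ η, e ∈ ℰ ∧ (∃ a ∈ e, a ∈ X) ∧ ∃ a ∈ e, a ∉ X)
    (hXunsat : ∀ a ∈ X, ∀ b ∈ X,
      (F.filter (fun e => a ∈ e)).card ≠ f a →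
      (F.filter (fun e => b ∈ e)).card ≠ f b → a = b)
    (hηsat : η ≠ none → ∀ a ∈ X, (F.filter (fun e => a ∈ e)).card = f a) :
    ∀ IX gamI : Finset (Sym2 V),
      IX = ((F.filter (fun e => (∃ a ∈ e, a ∈ X) ∧ ∃ a ∈ e, a ∉ X)) \ η.toFinset) ∪
           (η.toFinset \ (F.filter (fun e => (∃ a ∈ e, a ∈ X) ∧ ∃ a ∈ e, a ∉ X))) →
      gamI = ℰ.filter (fun e => ∀ a ∈ e, a ∈ X) ∪ IX →
      ∀ a b : V,
        (F.filter (fun e => a ∈ e)).card ≠ f a →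
        (F.filter (fun e => b ∈ e)).card ≠ f b →
        (a ∈ X ∨ ∃ e ∈ gamI, a ∈ e) →
        (b ∈ X ∨ ∃ e ∈ gamI, b ∈ e) →
        a = b :=
  stmt_8_general ℰ orig f haux1 F hFE hfac X hδ η hη hXunsat hηsat
end

section
/- Let a_1, a_2, …, a_t be an arbitrary sequence of integers, and let b > 0 be an integer. Then the number of integers q with a_1 ≤ q ≤ a_t having the property that there exists an index i with 1 ≤ i < t such that both a_i ∈ [q−b, q+b] and a_{i+1} ∈ [q−b, q+b], is at least (a_t − a_1)/(b+1) − Σ_{i=1}^{t−1} max{a_{i+1} − a_i − b, 0}. -/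
open Finset
open scoped Classical

/-!
Every `q ∈ [a₀, a_n)` lies in some step `[aᵢ, aᵢ₊₁)`, and there it fails to be within `b` of
both endpoints only if `q < aᵢ₊₁ - b` or `aᵢ + b < q`; each of these two ranges has at most
`max (aᵢ₊₁ - aᵢ - b) 0` points. Hence `a_n - a₀` is at most the number of good `q` plus twice
the total excess, and dividing by `b + 1 ≥ 2` gives the bound.
-/

theorem Finset.Ico_subset_biUnion_Ico {α : Type*} [LinearOrder α] [LocallyFiniteOrder α]
    (a : ℕ → α) (n : ℕ) :
    Ico (a 0) (a n) ⊆ (range n).biUnion fun i => Ico (a i) (a (i + 1)) := by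
  induction n with
  | zero => simp
  | succ n ih =>
    refine (Ico_subset_Ico_union_Ico (b := a n)).trans (union_subset ?_ ?_)
    · exact ih.trans (biUnion_subset_biUnion_of_subset_left _ (range_subset_range.2 n.le_succ))
    · exact subset_biUnion_of_mem (fun i => Ico (a i) (a (i + 1))) (self_mem_range_succ n)

lemma card_Ico_filter_not_near_le (x y b : ℤ) :
    (#{q ∈ Ico x y | ¬(q - b ≤ x ∧ y ≤ q + b)} : ℤ) ≤ 2 * max (y - x - b) 0 := by
  have hsub : {q ∈ Ico x y | ¬(q - b ≤ x ∧ y ≤ q + b)} ⊆ Ico (x + b + 1) y ∪ Ico x (y - b) := by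
    intro q
    simp only [mem_filter, mem_union, mem_Ico, not_and_or, not_le]
    omega
  have hcard := (card_le_card hsub).trans (card_union_le _ _)
  rw [Int.card_Ico, Int.card_Ico] at hcard
  have hcard' : (#{q ∈ Ico x y | ¬(q - b ≤ x ∧ y ≤ q + b)} : ℤ) ≤
      ((y - (x + b + 1)).toNat : ℤ) + ((y - b - x).toNat : ℤ) := by exact_mod_cast hcard
  rw [Int.toNat_eq_max, Int.toNat_eq_max] at hcard'
  omega

lemma sub_le_card_near_add_two_mul_sum (a : ℕ → ℤ) (b : ℤ) (hb : 0 ≤ b) (n : ℕ) :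
    a n - a 0 ≤ (#{q ∈ Icc (a 0) (a n) | ∃ i < n,
        (q - b ≤ a i ∧ a i ≤ q + b) ∧ (q - b ≤ a (i + 1) ∧ a (i + 1) ≤ q + b)} : ℤ) +
      2 * ∑ i ∈ range n, max (a (i + 1) - a i - b) 0 := by
  set P : ℤ → Prop := fun q => ∃ i < n,
    (q - b ≤ a i ∧ a i ≤ q + b) ∧ (q - b ≤ a (i + 1) ∧ a (i + 1) ≤ q + b)
  set U : ℕ → Finset ℤ := fun i =>
    {q ∈ Ico (a i) (a (i + 1)) | ¬(q - b ≤ a i ∧ a (i + 1) ≤ q + b)}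
  have hbad : {q ∈ Ico (a 0) (a n) | ¬P q} ⊆ (range n).biUnion U := by
    intro q hq
    rw [mem_filter] at hq
    obtain ⟨i, hi, hqi⟩ := mem_biUnion.1 (Ico_subset_biUnion_Ico a n hq.1)
    refine mem_biUnion.2 ⟨i, hi, mem_filter.2 ⟨hqi, fun hnear => hq.2 ?_⟩⟩
    rw [mem_Ico] at hqi
    exact ⟨i, mem_range.1 hi, ⟨hnear.1, hqi.1.trans (le_add_of_nonneg_right hb)⟩,
      ⟨(sub_le_self q hb).trans hqi.2.le, hnear.2⟩⟩
  have hbad_card : (#{q ∈ Ico (a 0) (a n) | ¬P q} : ℤ) ≤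
      2 * ∑ i ∈ range n, max (a (i + 1) - a i - b) 0 :=
    calc (#{q ∈ Ico (a 0) (a n) | ¬P q} : ℤ)
        ≤ (∑ i ∈ range n, #(U i) : ℕ) := by
          exact_mod_cast (card_le_card hbad).trans card_biUnion_le
      _ ≤ ∑ i ∈ range n, 2 * max (a (i + 1) - a i - b) 0 := by
          push_cast
          exact sum_le_sum fun i _ => card_Ico_filter_not_near_le _ _ _
      _ = 2 * ∑ i ∈ range n, max (a (i + 1) - a i - b) 0 := (mul_sum _ _ _).symm
  have hgood : #{q ∈ Ico (a 0) (a n) | P q} ≤ #{q ∈ Icc (a 0) (a n) | P q} :=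
    card_le_card (filter_subset_filter _ Ico_subset_Icc_self)
  calc a n - a 0 ≤ (#(Ico (a 0) (a n)) : ℤ) := by
        rw [Int.card_Ico]
        exact Int.self_le_toNat _
    _ = #{q ∈ Ico (a 0) (a n) | P q} + #{q ∈ Ico (a 0) (a n) | ¬P q} := by
        exact_mod_cast (card_filter_add_card_filter_not P).symm
    _ ≤ _ := add_le_add (by exact_mod_cast hgood) hbad_card

theorem stmt_12_general (t : ℕ) (a : ℕ → ℤ) (b : ℤ) (hb : 0 < b) :
    ((((Finset.Icc (a 0) (a (t - 1))).filter (fun q =>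
        ∃ i, i + 1 < t ∧ (q - b ≤ a i ∧ a i ≤ q + b) ∧
          (q - b ≤ a (i + 1) ∧ a (i + 1) ≤ q + b))).card : ℚ)) ≥
      ((a (t - 1) : ℚ) - (a 0 : ℚ)) / ((b : ℚ) + 1) -
        ∑ i ∈ Finset.range (t - 1), max ((a (i + 1) : ℚ) - (a i : ℚ) - (b : ℚ)) 0 := by
  have key := sub_le_card_near_add_two_mul_sum a b hb.le (t - 1)
  simp only [show ∀ i, i < t - 1 ↔ i + 1 < t from fun i => by omega] at key
  set c := #{q ∈ Icc (a 0) (a (t - 1)) | ∃ i, i + 1 < t ∧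
    (q - b ≤ a i ∧ a i ≤ q + b) ∧ (q - b ≤ a (i + 1) ∧ a (i + 1) ≤ q + b)}
  set s := ∑ i ∈ range (t - 1), max (a (i + 1) - a i - b) 0
  have hs : (0 : ℚ) ≤ s := by exact_mod_cast sum_nonneg fun i _ => le_max_right _ _
  have hkey : (a (t - 1) : ℚ) - a 0 ≤ c + 2 * s := by exact_mod_cast key
  have hsQ : (s : ℚ) = ∑ i ∈ range (t - 1), max ((a (i + 1) : ℚ) - a i - b) 0 := by
    simp only [s]; push_cast; rfl
  have hbQ : (1 : ℚ) ≤ b := by exact_mod_cast hb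
  rw [ge_iff_le, ← hsQ, sub_le_iff_le_add, div_le_iff₀ (by positivity)]
  nlinarith [(c.cast_nonneg : (0 : ℚ) ≤ c)]

/-- For an arbitrary integer sequence `a₁, …, a_t` and an
integer `b > 0`, the number of integers `q ∈ [a₁, a_t]` such that for some
`1 ≤ i < t` both `a_i` and `a_{i+1}` lie in `[q − b, q + b]` is at least
`(a_t − a₁)/(b+1) − Σ_{i=1}^{t−1} max{a_{i+1} − a_i − b, 0}` (as rationals).
Here the sequence is indexed as `a 0, …, a (t-1)`. -/
theorem stmt_12 (t : ℕ) (ht : 1 ≤ t) (a : ℕ → ℤ) (b : ℤ) (hb : 0 < b) :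
    ((((Finset.Icc (a 0) (a (t - 1))).filter (fun q =>
        ∃ i, i + 1 < t ∧ (q - b ≤ a i ∧ a i ≤ q + b) ∧
          (q - b ≤ a (i + 1) ∧ a (i + 1) ≤ q + b))).card : ℚ)) ≥
      ((a (t - 1) : ℚ) - (a 0 : ℚ)) / ((b : ℚ) + 1) -
        ∑ i ∈ Finset.range (t - 1), max ((a (i + 1) : ℚ) - (a i : ℚ) - (b : ℚ)) 0 :=
  stmt_12_general t a b hb
end
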